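/- arXiv:1912.00901 — 8 statements merged into one kernel-verified Lean document; each statement's English description precedes it below -/
import Mathlib

section
/- Let G be a finite group, H a subset of G, and γ a gamma function on G. Then any two of the following conditions imply the third: (1) H is a subgroup of G; (2) H is a subgroup of (G,∘); (3) H is invariant under γ(H). Moreover, if these conditions hold, then (H,∘) is isomorphic to a regular subgroup of Hol(H). -/
/- Formalization of results from "Hopf-Galois structures on extensions of degree p²q and
skew braces of order p²q: the cyclic Sylow p-subgroup case" (Campedel, Caranti, Del Corso).

Conventions: the paper composes permutations/automorphisms left-to-right and writes
`x^α` for the action; in Mathlib composition is right-to-left, so the paper's product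
`αβ` is rendered as `β * α`, the paper's `x^α` as `α x`, and the paper's conjugate
`α^β = β⁻¹αβ` as `β * α * β⁻¹`. -/

namespace HGS

universe u v

variable {G : Type*} [Group G]

/-- The right regular representation `ρ`: `rhoPerm g` is the permutation `x ↦ x * g`. -/
def rhoPerm (g : G) : Equiv.Perm G := Equiv.mulRight g

/-- The image `ρ(G)` of the right regular representation, as a subgroup of `Equiv.Perm G`. -/
def rhoSubgroup (G : Type*) [Group G] : Subgroup (Equiv.Perm G) where
  carrier := Set.range (rhoPerm (G := G))
  one_mem' := ⟨1, by ext x; simp [rhoPerm]⟩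
  mul_mem' := by
    rintro _ _ ⟨g, rfl⟩ ⟨h, rfl⟩
    exact ⟨h * g, by ext x; simp [rhoPerm, Equiv.Perm.mul_apply, mul_assoc]⟩
  inv_mem' := by
    rintro _ ⟨g, rfl⟩
    exact ⟨g⁻¹, by ext x; simp [rhoPerm, Equiv.Perm.inv_def, Equiv.mulRight_symm]⟩

/-- The (permutational) holomorph of `G`: the normalizer in the symmetric group
`Perm G` of the image of the right regular representation. -/
def Hol (G : Type*) [Group G] : Subgroup (Equiv.Perm G) :=
  Subgroup.normalizer ((rhoSubgroup G : Subgroup (Equiv.Perm G)) : Set (Equiv.Perm G))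

/-- A subgroup `N ≤ Perm G` is regular if it acts simply transitively on the set `G`. -/
def IsRegularSubgroup (N : Subgroup (Equiv.Perm G)) : Prop :=
  ∀ x y : G, ∃! n : N, (n : Equiv.Perm G) x = y

/-- A gamma function (GF) on `G`: a map `γ : G → Aut G` satisfying the gamma functional
equation `γ(g^{γ(h)}·h) = γ(g)γ(h)` (the right-hand side is the paper's product, which in
Mathlib's composition order reads `γ h * γ g`). -/
def IsGammaFunction (γ : G → MulAut G) : Prop :=
  ∀ g h : G, γ (γ h g * h) = γ h * γ g

/-- The circle operation `g ∘ h = g^{γ(h)} · h` associated to a gamma function. -/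
def circ (γ : G → MulAut G) (g h : G) : G := γ h g * h

/-- `H` is a subgroup of `(G, ∘)`: it contains the identity `1` of `(G, ∘)` and is closed
under the circle operation and under the circle inverse `g ↦ g^{-γ(g)⁻¹} = (γ g)⁻¹ g⁻¹`. -/
def IsCircSubgroup (γ : G → MulAut G) (H : Set G) : Prop :=
  (1 : G) ∈ H ∧ (∀ x ∈ H, ∀ y ∈ H, circ γ x y ∈ H) ∧ ∀ x ∈ H, ((γ x)⁻¹ x⁻¹ : G) ∈ H

/-! The three implications are one-line identities: `h^{γ(k)} = (h ∘ k) k⁻¹`,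
`h ∘ k = h^{γ(k)} k`, `h k = h^{γ(k)⁻¹} ∘ k`, together with the fact that the `∘`-inverse of `h`
is `(h⁻¹)^{γ(h)⁻¹}`; finiteness makes each `γ(k)` with `k ∈ H` restrict to a bijection of `H`,
so `H` is also invariant under the `γ(k)⁻¹`.
For the regular subgroup, the right translation `x ↦ x ∘ k` of `(H, ∘)` is `ρ(k)` after the
automorphism `γ(k)|_H`, so it normalizes `ρ(H)`. Evaluation at `1` sends it back to `k`, hence these
translations form a regular subgroup of `Hol H`, anti-isomorphic to `(H, ∘)`. -/

variable {γ : G → MulAut G}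

def IsGammaInvariant (γ : G → MulAut G) (H : Set G) : Prop :=
  ∀ x ∈ H, ∀ y ∈ H, γ y x ∈ H

theorem IsGammaFunction.map_one (hγ : IsGammaFunction γ) : γ 1 = 1 := by
  simpa using hγ 1 1

theorem circ_assoc (hγ : IsGammaFunction γ) (x y z : G) :
    circ γ (circ γ x y) z = circ γ x (circ γ y z) := by
  simp only [circ, hγ y z, map_mul, MulAut.mul_apply, mul_assoc]

theorem circ_one (hγ : IsGammaFunction γ) (x : G) : circ γ x 1 = x := by
  simp [circ, hγ.map_one]

theorem one_circ (x : G) : circ γ 1 x = x := by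
  simp [circ]

theorem circ_inv_circ_self (x : G) : circ γ ((γ x)⁻¹ x⁻¹) x = 1 := by
  simp [circ]

theorem IsGammaInvariant.inv_apply_mem [Finite G] {H : Set G} (hH : IsGammaInvariant γ H)
    {x y : G} (hx : x ∈ H) (hy : y ∈ H) : (γ y)⁻¹ x ∈ H := by
  have hmk := (H.toFinite.injOn_iff_bijOn_of_mapsTo fun z hz => hH z hz y hy).mp
    (γ y).injective.injOn
  obtain ⟨z, hz, rfl⟩ := hmk.surjOn hx
  simpa using hz

theorem IsGammaInvariant.circ_mem {K : Subgroup G} (hK : IsGammaInvariant γ K) {x y : G}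
    (hx : x ∈ K) (hy : y ∈ K) : circ γ x y ∈ K :=
  K.mul_mem (hK x hx y hy) hy

theorem IsCircSubgroup.isGammaInvariant {K : Subgroup G} (hc : IsCircSubgroup γ K) :
    IsGammaInvariant γ K := fun x hx y hy => by
  simpa [circ] using K.mul_mem (hc.2.1 x hx y hy) (K.inv_mem hy)

theorem IsGammaInvariant.isCircSubgroup [Finite G] {K : Subgroup G}
    (hK : IsGammaInvariant γ K) : IsCircSubgroup γ K :=
  ⟨K.one_mem, fun _ hx _ hy => hK.circ_mem hx hy,
    fun _ hx => hK.inv_apply_mem (K.inv_mem hx) hx⟩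

theorem IsCircSubgroup.exists_subgroup [Finite G] {H : Set G} (hc : IsCircSubgroup γ H)
    (hH : IsGammaInvariant γ H) : ∃ K : Subgroup G, (K : Set G) = H := by
  refine ⟨{ carrier := H, one_mem' := hc.1, mul_mem' := ?_, inv_mem' := ?_ }, rfl⟩
  · intro _ y hx hy
    simpa [circ] using hc.2.1 _ (hH.inv_apply_mem hx hy) y hy
  · intro x hx
    simpa using hH _ (hc.2.2 x hx) x hx

theorem rhoPerm_mem_Hol (g : G) : rhoPerm g ∈ Hol G :=
  Subgroup.le_normalizer ⟨g, rfl⟩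

theorem MulAut.toPerm_mul_rhoPerm_mul_inv (α : MulAut G) (g : G) :
    MulAut.toPerm G α * rhoPerm g * (MulAut.toPerm G α)⁻¹ = rhoPerm (α g) := by
  ext x
  change α (α⁻¹ x * g) = x * α g
  simp

theorem MulAut.toPerm_mem_Hol (α : MulAut G) : MulAut.toPerm G α ∈ Hol G := by
  refine Subgroup.mem_normalizer_iff.mpr fun σ => ⟨?_, ?_⟩
  · rintro ⟨g, rfl⟩
    exact ⟨α g, (MulAut.toPerm_mul_rhoPerm_mul_inv α g).symm⟩
  · rintro ⟨g, hg⟩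
    refine ⟨α⁻¹ g, ?_⟩
    rw [← MulAut.toPerm_mul_rhoPerm_mul_inv, hg]
    simp [mul_assoc]

theorem isRegularSubgroup_of_bijective_apply {α : Type*} {N : Subgroup (Equiv.Perm α)} (a : α)
    (h : Function.Bijective fun σ : N => (σ : Equiv.Perm α) a) : IsRegularSubgroup N := by
  intro x y
  obtain ⟨σx, hσx⟩ := h.2 x
  obtain ⟨σy, hσy⟩ := h.2 y
  refine ⟨σy * σx⁻¹, ?_, fun σ hσ => ?_⟩
  · simp [← hσx, ← hσy]
  · rw [eq_mul_inv_iff_mul_eq]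
    apply h.1
    simp [hσ, hσx, hσy]

section RegularSubgroup

variable [Finite G] {K : Subgroup G}

noncomputable def restrictMulAut (α : MulAut G) (hα : Set.MapsTo α K K) : MulAut K :=
  MulEquiv.ofBijective (MonoidHom.restrict (f := α.toMonoidHom) hα)
    (Finite.injective_iff_bijective.mp (MonoidHom.restrict_injective hα α.injective))

/-- The right translation `x ↦ x ∘ k` of `(K, ∘)`, factored as `ρ(k)` after `γ(k)|_K`. -/
noncomputable def circRightPerm (hK : IsGammaInvariant γ K) (k : K) : Equiv.Perm K :=
  rhoPerm k * MulAut.toPerm K (restrictMulAut (γ k) fun x hx => hK x hx k k.2)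

variable (hK : IsGammaInvariant γ K)

theorem coe_circRightPerm_apply (k x : K) : (circRightPerm hK k x : G) = circ γ x k :=
  rfl

theorem circRightPerm_apply_one (k : K) : circRightPerm hK k 1 = k :=
  Subtype.ext (by simp [coe_circRightPerm_apply, circ])

theorem circRightPerm_injective : Function.Injective (circRightPerm hK) :=
  fun x y h => by simpa [circRightPerm_apply_one] using congr($h 1)

theorem circRightPerm_mem_Hol (k : K) : circRightPerm hK k ∈ Hol K :=
  mul_mem (rhoPerm_mem_Hol k) (MulAut.toPerm_mem_Hol _)

theorem circRightPerm_circ (hγ : IsGammaFunction γ) (x y : K) :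
    circRightPerm hK ⟨circ γ x y, hK.circ_mem x.2 y.2⟩ =
      circRightPerm hK y * circRightPerm hK x :=
  Equiv.ext fun z => Subtype.ext (circ_assoc hγ z x y).symm

theorem circRightPerm_one (hγ : IsGammaFunction γ) : circRightPerm hK 1 = 1 :=
  Equiv.ext fun z => Subtype.ext (circ_one hγ z)

theorem circRightPerm_circInv (hγ : IsGammaFunction γ) (k : K) :
    circRightPerm hK ⟨(γ k)⁻¹ (k : G)⁻¹, hK.inv_apply_mem (K.inv_mem k.2) k.2⟩ =
      (circRightPerm hK k)⁻¹ := by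
  refine eq_inv_of_mul_eq_one_right ?_
  rw [← circRightPerm_circ hK hγ, ← circRightPerm_one hK hγ]
  exact congrArg _ (Subtype.ext (circ_inv_circ_self (k : G)))

noncomputable def circRightPermSubgroup (hγ : IsGammaFunction γ) : Subgroup (Equiv.Perm K) where
  carrier := Set.range (circRightPerm hK)
  one_mem' := ⟨1, circRightPerm_one hK hγ⟩
  mul_mem' := by
    rintro _ _ ⟨x, rfl⟩ ⟨y, rfl⟩
    exact ⟨_, circRightPerm_circ hK hγ y x⟩
  inv_mem' := by
    rintro _ ⟨k, rfl⟩
    exact ⟨_, circRightPerm_circInv hK hγ k⟩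

theorem exists_regular_subgroup_Hol (hγ : IsGammaFunction γ) :
    ∃ N : Subgroup (Equiv.Perm K), N ≤ Hol K ∧ IsRegularSubgroup N ∧
      ∃ e : K ≃ N, ∀ x y : K, e ⟨circ γ x y, hK.circ_mem x.2 y.2⟩ = e x * e y := by
  set N := circRightPermSubgroup hK hγ
  have hmk : Function.Bijective fun k : K => (⟨circRightPerm hK k, k, rfl⟩ : N) :=
    ⟨fun _ _ h => circRightPerm_injective hK (congrArg Subtype.val h),
      by rintro ⟨_, k, rfl⟩; exact ⟨k, rfl⟩⟩
  have heval : Function.Bijective fun σ : N => (σ : Equiv.Perm K) 1 := by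
    refine ⟨?_, fun k => ⟨⟨_, k, rfl⟩, circRightPerm_apply_one hK k⟩⟩
    rintro ⟨_, x, rfl⟩ ⟨_, y, rfl⟩ h
    simp only [circRightPerm_apply_one] at h
    rw [h]
  refine ⟨N, ?_, isRegularSubgroup_of_bijective_apply 1 heval, ?_⟩
  · rintro _ ⟨k, rfl⟩
    exact circRightPerm_mem_Hol hK k
  -- `circRightPerm` reverses `∘`, so the isomorphism onto `N` is followed by inversion.
  refine ⟨(Equiv.ofBijective _ hmk).trans (Equiv.inv N), fun x y => Subtype.ext ?_⟩
  simp [circRightPerm_circ hK hγ, mul_inv_rev]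

end RegularSubgroup

/-- Proposition `prop:2su3` of the paper.  For `H ⊆ G` and a gamma
function `γ` on `G`, any two of the following imply the third: (1) `H ≤ G`;
(2) `H ≤ (G, ∘)`; (3) `H` is `γ(H)`-invariant.  If they hold, `(H, ∘)` is isomorphic to
a regular subgroup of `Hol H`. -/
theorem two_of_three_subgroup_conditions
    {G : Type u} [Group G] [Finite G] (γ : G → MulAut G) (hγ : IsGammaFunction γ)
    (H : Set G) :
    ((∃ K : Subgroup G, (K : Set G) = H) → IsCircSubgroup γ H →
      (∀ x ∈ H, ∀ y ∈ H, γ y x ∈ H)) ∧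
    ((∃ K : Subgroup G, (K : Set G) = H) → (∀ x ∈ H, ∀ y ∈ H, γ y x ∈ H) →
      IsCircSubgroup γ H) ∧
    (IsCircSubgroup γ H → (∀ x ∈ H, ∀ y ∈ H, γ y x ∈ H) →
      (∃ K : Subgroup G, (K : Set G) = H)) ∧
    (∀ K : Subgroup G, (K : Set G) = H → IsCircSubgroup γ H →
      (∀ x ∈ H, ∀ y ∈ H, γ y x ∈ H) →
      ∃ hcl : ∀ x y : K, circ γ (x : G) (y : G) ∈ K,
      ∃ N : Subgroup (Equiv.Perm K), N ≤ Hol K ∧ IsRegularSubgroup N ∧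
        ∃ e : K ≃ N, ∀ x y : K, e ⟨circ γ (x : G) (y : G), hcl x y⟩ = e x * e y) := by
  refine ⟨?_, ?_, ?_, ?_⟩
  · rintro ⟨K, rfl⟩ hc
    exact hc.isGammaInvariant
  · rintro ⟨K, rfl⟩ hK
    exact IsGammaInvariant.isCircSubgroup hK
  · exact fun hc hH => hc.exists_subgroup hH
  · rintro K rfl - hK
    exact ⟨_, exists_regular_subgroup_Hol hK hγ⟩
end HGS
end

section
/- Let G be a finite group, A ≤ G a subgroup, and γ : A → Aut(G) a function such that A is invariant under γ(A). Writing [x,α] = x⁻¹·x^α for x ∈ G and α ∈ Aut(G), any two of the following conditions imply the third: (1) γ([x, γ(y)]) = 1 for all x, y ∈ A; (2) γ : A → Aut(G) is a homomorphism of groups (from A with its original operation); (3) γ satisfies the gamma functional equation γ(x^{γ(y)}·y) = γ(x)·γ(y) for all x, y ∈ A. -/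
/- Formalization of results from "Hopf-Galois structures on extensions of degree p²q and
skew braces of order p²q: the cyclic Sylow p-subgroup case" (Campedel, Caranti, Del Corso).

Conventions: the paper composes permutations/automorphisms left-to-right and writes
`x^α` for the action; in Mathlib composition is right-to-left, so the paper's product
`αβ` is rendered as `β * α`, the paper's `x^α` as `α x`, and the paper's conjugate
`α^β = β⁻¹αβ` as `β * α * β⁻¹`. -/

namespace HGS

universe u v

variable {G : Type*} [Group G]

/-- Lemma `Lemma:gamma_morfismi` of the paper.  Let `A ≤ G`, let
`γ : A → Aut G` be `γ(A)`-invariant, and write `[x, α] = x⁻¹ · (α x)`.  Any two of the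
following imply the third: (1) `γ([A, γ(A)]) = 1`; (2) `γ` is a homomorphism of groups on
`A` (with the paper's left-to-right composition, `γ(xy) = γ(x)γ(y)` reads
`γ (x*y) = γ y * γ x` in Mathlib's order); (3) `γ` satisfies the GFE on `A`. -/
theorem gamma_morphism_two_of_three
    {G : Type u} [Group G] [Finite G] (A : Subgroup G) (γ : G → MulAut G)
    (hinv : ∀ x ∈ A, ∀ y ∈ A, γ y x ∈ A) :
    ((∀ x ∈ A, ∀ y ∈ A, γ (x⁻¹ * γ y x) = 1) →
      (∀ x ∈ A, ∀ y ∈ A, γ (x * y) = γ y * γ x) →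
      (∀ x ∈ A, ∀ y ∈ A, γ (γ y x * y) = γ y * γ x)) ∧
    ((∀ x ∈ A, ∀ y ∈ A, γ (x⁻¹ * γ y x) = 1) →
      (∀ x ∈ A, ∀ y ∈ A, γ (γ y x * y) = γ y * γ x) →
      (∀ x ∈ A, ∀ y ∈ A, γ (x * y) = γ y * γ x)) ∧
    ((∀ x ∈ A, ∀ y ∈ A, γ (x * y) = γ y * γ x) →
      (∀ x ∈ A, ∀ y ∈ A, γ (γ y x * y) = γ y * γ x) →
      (∀ x ∈ A, ∀ y ∈ A, γ (x⁻¹ * γ y x) = 1)) := by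
  refine ⟨?_, ?_, ?_⟩
  · intro h1 h2 x hx y hy
    have hc : x⁻¹ * γ y x ∈ A := mul_mem (inv_mem hx) (hinv x hx y hy)
    have key : γ y x * y = x * ((x⁻¹ * γ y x) * y) := by group
    rw [key, h2 x hx _ (mul_mem hc hy), h2 _ hc _ hy, h1 x hx y hy, mul_one]
  · intro h1 h3 x hx y hy
    have hxA : ∃ x' ∈ A, γ y x' = x := by
      have hinj : Function.Injective (fun a : A => (⟨γ y a, hinv a a.2 y hy⟩ : A)) := by
        intro a b hab
        exact Subtype.ext ((γ y).injective (Subtype.mk_eq_mk.mp hab))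
      have hf := Finite.surjective_of_injective hinj
      obtain ⟨a, ha⟩ := hf ⟨x, hx⟩
      exact ⟨a, a.2, congrArg Subtype.val ha⟩
    obtain ⟨x', hx', hxx'⟩ := hxA
    have hb : x'⁻¹ * x ∈ A := mul_mem (inv_mem hx') hx
    have hgb : γ (x'⁻¹ * x) = 1 := by
      have := h1 x' hx' y hy
      rwa [hxx'] at this
    have hgx : γ x = γ x' := by
      have := h3 x' hx' (x'⁻¹ * x) hb
      rw [hgb, one_mul] at this
      simp only [MulAut.one_apply] at this
      rwa [mul_inv_cancel_left] at this
    have := h3 x' hx' y hy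
    rw [hxx'] at this
    rw [hgx]
    exact this
  · intro h2 h3 x hx y hy
    have hc : x⁻¹ * γ y x ∈ A := mul_mem (inv_mem hx) (hinv x hx y hy)
    have e1 := h3 x hx y hy
    have key : γ y x * y = x * ((x⁻¹ * γ y x) * y) := by group
    rw [key, h2 x hx _ (mul_mem hc hy), h2 _ hc _ hy] at e1
    have e2 : γ y * γ (x⁻¹ * γ y x) * γ x = γ y * 1 * γ x := by
      rw [mul_one]; exact e1
    exact mul_left_cancel (mul_right_cancel e2)
end HGS
end

section
/- Let G be a finite group, p an odd prime, A = ⟨a⟩ a cyclic subgroup of G of order pⁿ, and η ∈ Aut(G). Then there exists a relative gamma function γ : A → Aut(G) with γ(a) = η if and only if A is η-invariant and the order of η divides pⁿ. Moreover, when these conditions hold, γ is uniquely determined. -/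
/- Formalization of results from "Hopf-Galois structures on extensions of degree p²q and
skew braces of order p²q: the cyclic Sylow p-subgroup case" (Campedel, Caranti, Del Corso).

Conventions: the paper composes permutations/automorphisms left-to-right and writes
`x^α` for the action; in Mathlib composition is right-to-left, so the paper's product
`αβ` is rendered as `β * α`, the paper's `x^α` as `α x`, and the paper's conjugate
`α^β = β⁻¹αβ` as `β * α * β⁻¹`. -/

namespace HGS

universe u v

variable {G : Type*} [Group G]

/-- A relative gamma function (RGF) on a subgroup `A ≤ G` (encoded as a function on all
of `G` whose values outside `A` are irrelevant): `A` is `γ(A)`-invariant and the gamma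
functional equation holds on `A`. -/
def IsRGFOn (A : Subgroup G) (γ : G → MulAut G) : Prop :=
  (∀ x ∈ A, ∀ y ∈ A, γ y x ∈ A) ∧ (∀ x ∈ A, ∀ y ∈ A, γ (γ y x * y) = γ y * γ x)

/-! ### Arithmetic auxiliary lemmas (geometric sums and a lifting-the-exponent argument) -/

/-- The geometric sum `1 + s + ⋯ + s^(d-1)`. -/
private def sigS (s : ℤ) (d : ℕ) : ℤ := ∑ i ∈ Finset.range d, s ^ i

private lemma sigS_succ (s : ℤ) (d : ℕ) : sigS s (d + 1) = sigS s d + s ^ d :=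
  Finset.sum_range_succ _ _

private lemma sigS_add (s : ℤ) (m k : ℕ) : sigS s (m + k) = sigS s m + s ^ m * sigS s k := by
  unfold sigS
  rw [Finset.sum_range_add, Finset.mul_sum]
  congr 1
  exact Finset.sum_congr rfl fun i _ => (pow_add s m i)

private lemma sigS_mul (s : ℤ) (m e : ℕ) : sigS s (m * e) = sigS s m * sigS (s ^ m) e := by
  induction e with
  | zero => simp [sigS]
  | succ e ih =>
    rw [Nat.mul_succ, sigS_add, ih, sigS_succ, pow_mul]
    ring

private lemma one_add_pow_sub (x : ℤ) (j : ℕ) : x ^ 2 ∣ (1 + x) ^ j - (1 + (j : ℤ) * x) := by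
  induction j with
  | zero => simp
  | succ j ih =>
    have h : (1 + x) ^ (j + 1) - (1 + ((j : ℕ) + 1 : ℤ) * x)
        = ((1 + x) ^ j - (1 + (j : ℤ) * x)) * (1 + x) + (j : ℤ) * x ^ 2 := by ring
    have h' : (1 + x) ^ (j + 1) - (1 + ((j + 1 : ℕ) : ℤ) * x)
        = ((1 + x) ^ j - (1 + (j : ℤ) * x)) * (1 + x) + (j : ℤ) * x ^ 2 := by
      push_cast
      push_cast at h
      linarith [h]
    rw [h']
    exact dvd_add (ih.mul_right _) (dvd_mul_left _ _)

private lemma dvd_sigS_sub_card {p : ℕ} (x : ℤ) (hx : (p : ℤ) ∣ x - 1) (e : ℕ) :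
    (p : ℤ) ∣ sigS x e - e := by
  induction e with
  | zero => simp [sigS]
  | succ e ih =>
    have h : sigS x (e + 1) - ((e + 1 : ℕ) : ℤ) = (sigS x e - e) + (x ^ e - 1) := by
      rw [sigS_succ]; push_cast; ring
    rw [h]
    have h2 : (x - 1) ∣ x ^ e - 1 := by
      have := sub_dvd_pow_sub_pow x 1 e
      rwa [one_pow] at this
    exact dvd_add ih (hx.trans h2)

private lemma tau_eq {p : ℕ} (hp : p.Prime) (hp2 : p ≠ 2) (c : ℤ) :
    ∃ X : ℤ, sigS (1 + p * c) p = p * (1 + p * X) := by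
  obtain ⟨e, he⟩ := hp.odd_of_ne_two hp2
  have hsum : ∑ j ∈ Finset.range p, (j : ℤ) = p * e := by
    have h1 : ((∑ j ∈ Finset.range p, j) * 2 : ℕ) = p * (p - 1) := Finset.sum_range_id_mul_two p
    have h2 : p - 1 = 2 * e := by omega
    have h3 : ((∑ j ∈ Finset.range p, j : ℕ) : ℤ) * 2 = (p : ℤ) * (2 * e) := by
      exact_mod_cast h2 ▸ h1
    have h4 : (∑ j ∈ Finset.range p, (j : ℤ)) = ((∑ j ∈ Finset.range p, j : ℕ) : ℤ) := by
      push_cast; rfl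
    rw [h4]
    linarith
  obtain ⟨Y, hY⟩ : ((p : ℤ) * c) ^ 2 ∣
      (sigS (1 + p * c) p - ∑ j ∈ Finset.range p, (1 + (j : ℤ) * ((p : ℤ) * c))) := by
    rw [sigS, ← Finset.sum_sub_distrib]
    exact Finset.dvd_sum fun j _ => one_add_pow_sub ((p : ℤ) * c) j
  have hsum2 : ∑ j ∈ Finset.range p, (1 + (j : ℤ) * ((p : ℤ) * c))
      = (p : ℤ) + ((p : ℤ) * e) * ((p : ℤ) * c) := by
    rw [Finset.sum_add_distrib, Finset.sum_const, Finset.card_range, ← Finset.sum_mul, hsum]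
    simp [nsmul_eq_mul]
  refine ⟨e * c + c ^ 2 * Y, ?_⟩
  rw [hsum2] at hY
  have h5 : sigS (1 + p * c) p
      = (p : ℤ) + ((p : ℤ) * e) * ((p : ℤ) * c) + ((p : ℤ) * c) ^ 2 * Y := by linarith
  rw [h5]; ring

private lemma sigS_p_pow {p : ℕ} (hp : p.Prime) (hp2 : p ≠ 2) (t : ℤ) (m : ℕ) :
    ∃ u : ℤ, sigS (1 + p * t) (p ^ m) = (p : ℤ) ^ m * u ∧ ¬ (p : ℤ) ∣ u := by
  have hpZ : Prime (p : ℤ) := Nat.prime_iff_prime_int.mp hp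
  induction m with
  | zero =>
    refine ⟨1, by simp [sigS], by simpa using hpZ.not_dvd_one⟩
  | succ m ih =>
    obtain ⟨u, hu, hpu⟩ := ih
    have h1 : (p : ℤ) ∣ (1 + (p : ℤ) * t) ^ (p ^ m) - 1 := by
      have h2 : ((1 + (p : ℤ) * t) - 1) ∣ (1 + (p : ℤ) * t) ^ (p ^ m) - 1 ^ (p ^ m) :=
        sub_dvd_pow_sub_pow _ _ _
      rw [one_pow] at h2
      exact dvd_trans ⟨t, by ring⟩ h2
    obtain ⟨c, hc⟩ := h1
    have hsc : (1 + (p : ℤ) * t) ^ (p ^ m) = 1 + p * c := by linarith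
    obtain ⟨X, hX⟩ := tau_eq hp hp2 c
    refine ⟨u * (1 + p * X), ?_, ?_⟩
    · rw [pow_succ, sigS_mul, hu, hsc, hX]
      ring
    · intro hdvd
      rcases hpZ.dvd_mul.mp hdvd with h | h
      · exact hpu h
      · have h3 : (p : ℤ) ∣ 1 := (dvd_add_right ⟨X, rfl⟩).mp (by rwa [add_comm] at h)
        exact hpZ.not_dvd_one h3

private lemma sigS_pow_dvd_iff {p : ℕ} (hp : p.Prime) (hp2 : p ≠ 2) (t : ℤ) (n : ℕ) :
    ∀ d : ℕ, ((p : ℤ) ^ n ∣ sigS (1 + p * t) d ↔ p ^ n ∣ d) := by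
  have hpZ : Prime (p : ℤ) := Nat.prime_iff_prime_int.mp hp
  induction n with
  | zero => intro d; simp
  | succ n ih =>
    intro d
    constructor
    · intro hdvd
      have h' : (p : ℤ) ^ n ∣ sigS (1 + p * t) d :=
        dvd_trans (pow_dvd_pow _ (Nat.le_succ n)) hdvd
      obtain ⟨e, rfl⟩ := (ih d).mp h'
      obtain ⟨u, hu, hpu⟩ := sigS_p_pow hp hp2 t n
      rw [sigS_mul, hu] at hdvd
      have hp0 : ((p : ℤ)) ^ n ≠ 0 := pow_ne_zero _ (by exact_mod_cast hp.pos.ne')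
      have h2 : (p : ℤ) ∣ u * sigS ((1 + p * t) ^ (p ^ n)) e := by
        rcases hdvd with ⟨w, hw⟩
        refine ⟨w, ?_⟩
        apply mul_left_cancel₀ hp0
        rw [pow_succ] at hw
        linear_combination hw
      have h3 : (p : ℤ) ∣ sigS ((1 + p * t) ^ (p ^ n)) e := by
        rcases hpZ.dvd_mul.mp h2 with h | h
        · exact absurd h hpu
        · exact h
      have h4 : (p : ℤ) ∣ (1 + (p : ℤ) * t) ^ (p ^ n) - 1 := by
        have h2' : ((1 + (p : ℤ) * t) - 1) ∣ (1 + (p : ℤ) * t) ^ (p ^ n) - 1 ^ (p ^ n) :=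
          sub_dvd_pow_sub_pow _ _ _
        rw [one_pow] at h2'
        exact dvd_trans ⟨t, by ring⟩ h2'
      have h5 : (p : ℤ) ∣ (e : ℤ) := by
        have hd1 := dvd_sigS_sub_card _ h4 e
        have hd2 := dvd_sub h3 hd1
        simpa using hd2
      have h6 : p ∣ e := by exact_mod_cast h5
      obtain ⟨f, rfl⟩ := h6
      rw [pow_succ]
      exact mul_dvd_mul_left _ ⟨f, rfl⟩
    · rintro ⟨e, rfl⟩
      obtain ⟨u, hu, -⟩ := sigS_p_pow hp hp2 t (n + 1)
      rw [sigS_mul, hu]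
      exact Dvd.dvd.mul_right ⟨u, rfl⟩ _

/-! ### Group-theoretic auxiliary lemmas -/

private lemma gamma_one {A : Subgroup G} {γ : G → MulAut G} (h : IsRGFOn A γ) : γ 1 = 1 := by
  have h1 := h.2 1 A.one_mem 1 A.one_mem
  rw [map_one, one_mul] at h1
  exact (left_eq_mul.mp h1)

/-- The underlying type of the "circle" group attached to an RGF. -/
private structure Circ {G : Type u} [Group G] (A : Subgroup G) (γ : G → MulAut G) : Type u where
  val : G
  mem : val ∈ A

private theorem Circ.ext' {A : Subgroup G} {γ : G → MulAut G} :
    ∀ {c d : Circ A γ}, c.val = d.val → c = d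
  | ⟨_, _⟩, ⟨_, _⟩, rfl => rfl

/-- Lagrange for the circle group: for an RGF `γ` on `A` and `x ∈ A`, the order of
`γ x` divides the cardinality of `A`. -/
private theorem orderOf_gamma_dvd_card {G : Type u} [Group G] [Finite G] {A : Subgroup G}
    {γ : G → MulAut G} (h : IsRGFOn A γ) {x : G} (hx : x ∈ A) :
    orderOf (γ x) ∣ Nat.card A := by
  classical
  have hpowmem : ∀ y ∈ A, ∀ (k : ℕ), ∀ z ∈ A, ((γ y) ^ k) z ∈ A := by
    intro y hy k
    induction k with
    | zero => intro z hz; simpa using hz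
    | succ k ih =>
      intro z hz
      rw [pow_succ, MulAut.mul_apply]
      exact ih _ (h.1 z hz y hy)
  have hinvmem : ∀ y ∈ A, ∀ z ∈ A, (γ y)⁻¹ z ∈ A := by
    intro y hy z hz
    haveI : Finite (MulAut G) :=
      Finite.of_injective (fun f => (f : G → G)) DFunLike.coe_injective
    have hpos : 0 < orderOf (γ y) := orderOf_pos _
    have hinv : (γ y)⁻¹ = (γ y) ^ (orderOf (γ y) - 1) := by
      apply inv_eq_of_mul_eq_one_right
      rw [← pow_succ', Nat.sub_add_cancel hpos]
      exact pow_orderOf_eq_one _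
    rw [hinv]
    exact hpowmem y hy _ z hz
  letI : Mul (Circ A γ) :=
    ⟨fun c d => ⟨γ d.val c.val * d.val, A.mul_mem (h.1 _ c.mem _ d.mem) d.mem⟩⟩
  letI : One (Circ A γ) := ⟨⟨1, A.one_mem⟩⟩
  letI : Inv (Circ A γ) :=
    ⟨fun c => ⟨(γ c.val)⁻¹ c.val⁻¹, hinvmem _ c.mem _ (A.inv_mem c.mem)⟩⟩
  have hmulval : ∀ c d : Circ A γ, (c * d).val = γ d.val c.val * d.val := fun _ _ => rfl
  letI : Group (Circ A γ) := Group.ofLeftAxioms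
    (by
      intro b c d
      apply Circ.ext'
      show γ d.val (γ c.val b.val * c.val) * d.val
          = γ (γ d.val c.val * d.val) b.val * (γ d.val c.val * d.val)
      rw [h.2 c.val c.mem d.val d.mem, map_mul, MulAut.mul_apply]
      simp [mul_assoc])
    (by
      intro c
      apply Circ.ext'
      show γ c.val 1 * c.val = c.val
      rw [map_one, one_mul])
    (by
      intro c
      apply Circ.ext'
      show γ c.val ((γ c.val)⁻¹ c.val⁻¹) * c.val = 1
      rw [MulAut.apply_inv_self, inv_mul_cancel])
  letI : Finite (Circ A γ) :=
    Finite.of_injective (fun c : Circ A γ => c.val) (fun _ _ hcd => Circ.ext' hcd)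
  set c : Circ A γ := ⟨x, hx⟩ with hc
  have hgpow : ∀ k : ℕ, γ ((c ^ k).val) = (γ x) ^ k := by
    intro k
    induction k with
    | zero =>
      have h0 : (c ^ 0).val = 1 := by rw [pow_zero]; rfl
      rw [h0, pow_zero]
      exact gamma_one h
    | succ k ih =>
      rw [pow_succ c k, hmulval, h.2 _ (c ^ k).mem _ c.mem, ih, pow_succ']
  have hN : c ^ (Nat.card (Circ A γ)) = 1 :=
    orderOf_dvd_iff_pow_eq_one.mp (orderOf_dvd_natCard c)
  have hcard : Nat.card (Circ A γ) = Nat.card A :=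
    Nat.card_congr ⟨fun c => ⟨c.val, c.mem⟩, fun z => ⟨z.1, z.2⟩, fun _ => rfl, fun _ => rfl⟩
  have hfin : (γ x) ^ (Nat.card A) = 1 := by
    rw [← hcard, ← hgpow, hN]
    exact gamma_one h
  exact orderOf_dvd_iff_pow_eq_one.mpr hfin

private lemma eta_pow {G : Type u} [Group G] (η : MulAut G) (a : G) (s : ℤ)
    (hsa : a ^ s = η a) (k : ℕ) : ∀ c : ℤ, (η ^ k) (a ^ c) = a ^ (s ^ k * c) := by
  induction k with
  | zero => intro c; simp
  | succ k ih =>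
    intro c
    rw [pow_succ, MulAut.mul_apply]
    have h1 : η (a ^ c) = a ^ (s * c) := by
      rw [map_zpow, ← hsa, ← zpow_mul]
    rw [h1, ih (s * c)]
    congr 1
    ring

/-- Proposition `prop:images_gamma` of the paper.  For `A = ⟨a⟩`
cyclic of order `pⁿ` (`p` odd) and `η ∈ Aut G`, there is a relative gamma function
`γ : A → Aut G` with `γ a = η` iff `A` is `η`-invariant and `ord(η) ∣ pⁿ`; moreover such
`γ` is unique (on `A`). -/
theorem rgf_on_cyclic_p_subgroup_iff
    {G : Type u} [Group G] [Finite G] {p n : ℕ} (hp : p.Prime) (hp2 : p ≠ 2)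
    (a : G) (ha : orderOf a = p ^ n) (η : MulAut G) :
    ((∃ γ : G → MulAut G, IsRGFOn (Subgroup.zpowers a) γ ∧ γ a = η) ↔
      ((∀ x ∈ Subgroup.zpowers a, η x ∈ Subgroup.zpowers a) ∧ orderOf η ∣ p ^ n)) ∧
    (∀ γ₁ γ₂ : G → MulAut G, IsRGFOn (Subgroup.zpowers a) γ₁ →
      IsRGFOn (Subgroup.zpowers a) γ₂ → γ₁ a = η → γ₂ a = η →
      ∀ x ∈ Subgroup.zpowers a, γ₁ x = γ₂ x) := by
  classical
  set A := Subgroup.zpowers a with hA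
  -- forward direction facts
  have hfwd : ∀ γ : G → MulAut G, IsRGFOn A γ → γ a = η →
      (∀ x ∈ A, η x ∈ A) ∧ orderOf η ∣ p ^ n := by
    intro γ h hγa
    constructor
    · intro x hx
      rw [← hγa]
      exact h.1 x hx a (Subgroup.mem_zpowers a)
    · have hdvd := orderOf_gamma_dvd_card h (Subgroup.mem_zpowers a)
      rwa [hγa, Nat.card_zpowers, ha] at hdvd
  -- main construction + uniqueness, assuming the two conditions
  have hmain : ∀ (_ : ∀ x ∈ A, η x ∈ A) (_ : orderOf η ∣ p ^ n),
      (∃ γ : G → MulAut G, IsRGFOn A γ ∧ γ a = η) ∧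
      (∀ γ₁ γ₂ : G → MulAut G, IsRGFOn A γ₁ → IsRGFOn A γ₂ → γ₁ a = η → γ₂ a = η →
        ∀ x ∈ A, γ₁ x = γ₂ x) := by
    intro hinv hord
    have hpZ : Prime (p : ℤ) := Nat.prime_iff_prime_int.mp hp
    -- order of a as an integer divisibility criterion
    have hapow : ∀ j : ℤ, a ^ j = 1 ↔ (p : ℤ) ^ n ∣ j := by
      intro j
      rw [← orderOf_dvd_iff_zpow_eq_one, ha]
      push_cast
      rfl
    have hordη : η ^ (p ^ n) = 1 := orderOf_dvd_iff_pow_eq_one.mp hord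
    -- obtain s = 1 + p t with a ^ s = η a
    obtain ⟨t, hsa⟩ : ∃ t : ℤ, a ^ (1 + (p : ℤ) * t) = η a := by
      obtain ⟨s₀, hs₀⟩ := Subgroup.mem_zpowers_iff.mp (hinv a (Subgroup.mem_zpowers a))
      rcases Nat.eq_zero_or_pos n with rfl | hn
      · -- trivial case : a = 1
        have ha1 : a = 1 := orderOf_eq_one_iff.mp (by simpa using ha)
        refine ⟨0, ?_⟩
        rw [ha1, map_one, one_zpow]
      · -- η^(pⁿ) = 1 forces s₀ ≡ 1 mod p
        have hpow : (η ^ (p ^ n)) a = a := by rw [hordη]; rfl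
        have h1 : a ^ (s₀ ^ (p ^ n) * 1) = a := by
          rw [← eta_pow η a s₀ hs₀ (p ^ n) 1, zpow_one, hpow]
        have h2 : (p : ℤ) ^ n ∣ s₀ ^ (p ^ n) - 1 := by
          rw [← hapow]
          rw [zpow_sub, zpow_one]
          rw [mul_one] at h1
          rw [h1, mul_inv_cancel]
        have h3 : (p : ℤ) ∣ s₀ ^ (p ^ n) - 1 :=
          dvd_trans (dvd_pow_self _ hn.ne') h2
        haveI : Fact p.Prime := ⟨hp⟩
        have h4 : ((s₀ : ZMod p)) ^ (p ^ n) = 1 := by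
          have := (ZMod.intCast_zmod_eq_zero_iff_dvd (s₀ ^ (p ^ n) - 1) p).mpr h3
          push_cast at this
          linear_combination this
        have h5 : ((s₀ : ZMod p)) ^ (p ^ n) = (s₀ : ZMod p) := ZMod.pow_card_pow _
        have h6 : (p : ℤ) ∣ s₀ - 1 := by
          rw [← ZMod.intCast_zmod_eq_zero_iff_dvd]
          push_cast
          rw [← h5, h4]
          ring
        obtain ⟨t, ht⟩ := h6
        refine ⟨t, ?_⟩
        rw [show (1 : ℤ) + (p : ℤ) * t = s₀ by linarith, hs₀]
    set s : ℤ := 1 + (p : ℤ) * t with hs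
    have hη : ∀ (k : ℕ) (c : ℤ), (η ^ k) (a ^ c) = a ^ (s ^ k * c) := eta_pow η a s hsa
    have hdvd_iff : ∀ d : ℕ, ((p : ℤ) ^ n ∣ sigS s d ↔ p ^ n ∣ d) :=
      sigS_pow_dvd_iff hp hp2 t n
    have hps : ¬ (p : ℤ) ∣ s := by
      intro hd
      have h1 : (p : ℤ) ∣ (p : ℤ) * t := Dvd.intro t rfl
      have h2 : (p : ℤ) ∣ 1 := by
        have h3 := dvd_sub hd h1
        rw [hs] at h3
        simpa using h3
      exact hpZ.not_dvd_one h2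
    have hcop : ∀ m : ℕ, IsCoprime ((p : ℤ) ^ n) (s ^ m) := fun m =>
      ((hpZ.coprime_iff_not_dvd.mpr hps).pow : IsCoprime ((p : ℤ) ^ n) (s ^ m))
    -- key divisibility step
    have hdiff : ∀ u v : ℕ, v ≤ u → (p : ℤ) ^ n ∣ sigS s u - sigS s v → p ^ n ∣ u - v := by
      intro u v huv hdvd
      have h2 : sigS s u - sigS s v = s ^ v * sigS s (u - v) := by
        have := sigS_add s v (u - v)
        rw [Nat.add_sub_cancel' huv] at this
        linarith
      rw [h2] at hdvd
      exact (hdvd_iff _).mp ((hcop v).dvd_of_dvd_mul_left hdvd)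
    -- equal powers of a with geometric-sum exponents give equal powers of η
    have hkey : ∀ k m : ℕ, a ^ sigS s k = a ^ sigS s m → η ^ k = η ^ m := by
      have main : ∀ k m : ℕ, m ≤ k → a ^ sigS s k = a ^ sigS s m → η ^ k = η ^ m := by
        intro k m hmk he
        have h1 : (p : ℤ) ^ n ∣ sigS s k - sigS s m := by
          rw [← hapow, zpow_sub, he, mul_inv_cancel]
        have h4 : p ^ n ∣ k - m := hdiff k m hmk h1
        have h5 : η ^ (k - m) = 1 :=
          orderOf_dvd_iff_pow_eq_one.mp (hord.trans h4)
        calc η ^ k = η ^ (m + (k - m)) := by rw [Nat.add_sub_cancel' hmk]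
          _ = η ^ m * η ^ (k - m) := pow_add η m (k - m)
          _ = η ^ m := by rw [h5, mul_one]
      intro k m he
      rcases le_total m k with hc | hc
      · exact main k m hc he
      · exact (main m k hc he.symm).symm
    -- surjectivity of k ↦ a ^ sigS s k onto A
    have hsurj : ∀ x ∈ A, ∃ k : ℕ, a ^ sigS s k = x := by
      intro x hx
      obtain ⟨j, hj⟩ := Subgroup.mem_zpowers_iff.mp hx
      haveI : NeZero (p ^ n) := ⟨pow_ne_zero n hp.pos.ne'⟩
      have hcast : ((p ^ n : ℕ) : ℤ) = (p : ℤ) ^ n := by push_cast; rfl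
      have hF : Function.Surjective
          (fun k : ZMod (p ^ n) => ((sigS s (ZMod.val k) : ℤ) : ZMod (p ^ n))) := by
        apply Finite.surjective_of_injective
        intro k m hkm
        simp only at hkm
        have h1 : (p : ℤ) ^ n ∣ sigS s (ZMod.val m) - sigS s (ZMod.val k) := by
          rw [← hcast]
          exact Int.ModEq.dvd ((ZMod.intCast_eq_intCast_iff _ _ _).mp hkm)
        have hvx : ∀ u v : ZMod (p ^ n), ZMod.val v ≤ ZMod.val u →
            (p : ℤ) ^ n ∣ sigS s (ZMod.val u) - sigS s (ZMod.val v) → u = v := by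
          intro u v huv hdvd
          have h4 := hdiff _ _ huv hdvd
          have h5 : ZMod.val u - ZMod.val v = 0 := by
            rcases Nat.eq_zero_or_pos (ZMod.val u - ZMod.val v) with h0 | h0
            · exact h0
            · exact absurd (Nat.le_of_dvd h0 h4)
                (not_le.mpr (lt_of_le_of_lt (Nat.sub_le _ _) (ZMod.val_lt u)))
          have h6 : ZMod.val u = ZMod.val v := le_antisymm (Nat.sub_eq_zero_iff_le.mp h5) huv
          exact ZMod.val_injective _ h6
        rcases le_total (ZMod.val k) (ZMod.val m) with hc | hc
        · exact (hvx m k hc h1).symm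
        · exact hvx k m hc (by rw [← neg_sub]; exact dvd_neg.mpr h1)
      obtain ⟨k, hk⟩ := hF ((j : ℤ) : ZMod (p ^ n))
      refine ⟨ZMod.val k, ?_⟩
      have h1 : (p : ℤ) ^ n ∣ sigS s (ZMod.val k) - j := by
        simp only at hk
        rw [← hcast, ← neg_sub]
        exact dvd_neg.mpr (Int.ModEq.dvd ((ZMod.intCast_eq_intCast_iff _ _ _).mp hk))
      have h2 : a ^ (sigS s (ZMod.val k) - j) = 1 := (hapow _).mpr h1
      rw [zpow_sub] at h2
      rw [mul_inv_eq_one.mp h2, hj]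
    -- a = a ^ sigS s 1
    have ha1 : a = a ^ sigS s 1 := by
      have : sigS s 1 = 1 := by simp [sigS]
      rw [this, zpow_one]
    -- any RGF agreeing with η at a takes the value η^k at a^(sigS s k)
    have huniq : ∀ γ : G → MulAut G, IsRGFOn A γ → γ a = η →
        ∀ k : ℕ, γ (a ^ sigS s k) = η ^ k := by
      intro γ h hγa k
      induction k with
      | zero =>
        have h0 : sigS s 0 = 0 := by simp [sigS]
        rw [h0, zpow_zero, pow_zero]
        exact gamma_one h
      | succ k ih =>
        have hy : a ^ sigS s k ∈ A := Subgroup.mem_zpowers_iff.mpr ⟨_, rfl⟩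
        have heq := h.2 a (Subgroup.mem_zpowers a) (a ^ sigS s k) hy
        rw [ih, hγa] at heq
        have hval : (η ^ k) a = a ^ (s ^ k) := by
          have := hη k 1
          rwa [zpow_one, mul_one] at this
        rw [hval, ← zpow_add] at heq
        have hexp : (s ^ k : ℤ) + sigS s k = sigS s (k + 1) := by
          rw [sigS_succ]; ring
        rw [hexp] at heq
        rw [heq, pow_succ]
      -- end of induction
    refine ⟨?_, ?_⟩
    · -- existence
      set γ₀ : G → MulAut G :=
        fun x => if hex : ∃ k : ℕ, a ^ sigS s k = x then η ^ hex.choose else 1 with hγ₀def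
      have hγ₀ : ∀ k : ℕ, γ₀ (a ^ sigS s k) = η ^ k := by
        intro k
        have hex : ∃ m : ℕ, a ^ sigS s m = a ^ sigS s k := ⟨k, rfl⟩
        simp only [hγ₀def]
        rw [dif_pos hex]
        exact hkey _ _ hex.choose_spec
      have hγ₀a : γ₀ a = η := by
        have h1 := hγ₀ 1
        rw [← ha1, pow_one] at h1
        exact h1
      refine ⟨γ₀, ⟨?_, ?_⟩, hγ₀a⟩
      · intro x hx y hy
        obtain ⟨k, rfl⟩ := hsurj x hx
        obtain ⟨m, rfl⟩ := hsurj y hy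
        rw [hγ₀ m, hη m (sigS s k)]
        exact Subgroup.mem_zpowers_iff.mpr ⟨_, rfl⟩
      · intro x hx y hy
        obtain ⟨k, rfl⟩ := hsurj x hx
        obtain ⟨m, rfl⟩ := hsurj y hy
        rw [hγ₀ m, hη m (sigS s k), ← zpow_add]
        have hexp : s ^ m * sigS s k + sigS s m = sigS s (m + k) := by
          rw [sigS_add]; ring
        rw [hexp, hγ₀ (m + k), hγ₀ k, pow_add]
    · -- uniqueness
      intro γ₁ γ₂ h₁ h₂ e₁ e₂ x hx
      obtain ⟨k, rfl⟩ := hsurj x hx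
      rw [huniq γ₁ h₁ e₁ k, huniq γ₂ h₂ e₂ k]
  constructor
  · constructor
    · rintro ⟨γ, h, hγa⟩
      exact hfwd γ h hγa
    · rintro ⟨hinv, hord⟩
      exact (hmain hinv hord).1
  · intro γ₁ γ₂ h₁ h₂ e₁ e₂
    obtain ⟨hinv, hord⟩ := hfwd γ₁ h₁ e₁
    exact (hmain hinv hord).2 γ₁ γ₂ h₁ h₂ e₁ e₂
end HGS
end

section
/- Let G be a finite group, p an odd prime, A = ⟨a⟩ a cyclic subgroup of G of order pⁿ, and γ : A → Aut(G) a relative gamma function; write a^{γ(a)} = a^s. Then for every k ≥ 0, the k-th power of a in the group (A,∘) equals a^{e_s(k)}, where e_s(0) = 0 and e_s(k) = Σ_{i=0}^{k−1} s^i. Consequently the order of a in (A,∘) equals the order of a in A, and (A,∘) is generated by a. -/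
/- Formalization of results from "Hopf-Galois structures on extensions of degree p²q and
skew braces of order p²q: the cyclic Sylow p-subgroup case" (Campedel, Caranti, Del Corso).

Conventions: the paper composes permutations/automorphisms left-to-right and writes
`x^α` for the action; in Mathlib composition is right-to-left, so the paper's product
`αβ` is rendered as `β * α`, the paper's `x^α` as `α x`, and the paper's conjugate
`α^β = β⁻¹αβ` as `β * α * β⁻¹`. -/

namespace HGS

universe u v

variable {G : Type*} [Group G]

/-- `circPow γ a k` is the `k`-th power `a^{∘k}` of `a` in `(A, ∘)`. -/
def circPow (γ : G → MulAut G) (a : G) : ℕ → G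
  | 0 => 1
  | k + 1 => circ γ (circPow γ a k) a

/- Since `γ a` acts on `⟨a⟩` as `x ↦ x ^ s`, induction gives `a^{∘k} = a^{e_s(k)}`.
The heart of the matter is `s ≡ 1 (mod p)`: otherwise `s - 1` is invertible modulo `pⁿ`,
so some `x = a^c` satisfies `x ^ s * a = x`, that is `x ∘ a = x`; the gamma equation then
gives `γ(x) = γ(x) γ(a)`, so `γ(a) = 1` and `a ^ s = a`, whence `p ∣ s - 1` after all.
Once `s ≡ 1 (mod p)`, lifting the exponent gives `v_p(e_s(k)) = v_p(k)`, hence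
`e_s(k) ≡ e_s(l) (mod pⁿ)` iff `k ≡ l (mod pⁿ)`: the powers `a^{e_s(k)}`, `k < pⁿ`,
are distinct, so they exhaust `⟨a⟩`. -/

open Finset

section GeomSum

variable {p : ℕ} (hp : p.Prime)
include hp

theorem not_dvd_of_dvd_sub_one {x : ℤ} (hx : (p : ℤ) ∣ x - 1) : ¬(p : ℤ) ∣ x := fun h ↦
  Nat.prime_iff_prime_int.mp hp |>.not_dvd_one (by simpa using dvd_sub h hx)

variable (hp_odd : Odd p)
include hp_odd

theorem emultiplicity_geom_sum {x : ℤ} (hx : (p : ℤ) ∣ x - 1) (k : ℕ) :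
    emultiplicity (p : ℤ) (∑ i ∈ range k, x ^ i) = emultiplicity p k := by
  rcases eq_or_ne x 1 with rfl | hx1
  · simp [Int.natCast_emultiplicity]
  have hfin : emultiplicity (p : ℤ) (x - 1) ≠ ⊤ :=
    finiteMultiplicity_iff_emultiplicity_ne_top.mp <|
      Int.finiteMultiplicity_iff.mpr ⟨by simpa using hp.ne_one, sub_ne_zero.mpr hx1⟩
  have hlte := Int.emultiplicity_pow_sub_pow hp hp_odd hx (not_dvd_of_dvd_sub_one hp hx) k
  rw [one_pow, ← geom_sum_mul, emultiplicity_mul (Nat.prime_iff_prime_int.mp hp),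
    add_comm (emultiplicity _ (x - 1))] at hlte
  exact WithTop.add_right_cancel hfin hlte

theorem pow_dvd_geom_sum_iff {s : ℕ} (hs : (p : ℤ) ∣ s - 1) (n k : ℕ) :
    p ^ n ∣ ∑ i ∈ range k, s ^ i ↔ p ^ n ∣ k := by
  rw [pow_dvd_iff_le_emultiplicity, pow_dvd_iff_le_emultiplicity, ← Int.natCast_emultiplicity,
    ← emultiplicity_geom_sum hp hp_odd hs, Nat.cast_sum]
  simp only [Nat.cast_pow]

theorem geom_sum_modEq_geom_sum_iff {s : ℕ} (hs : (p : ℤ) ∣ s - 1) (n k l : ℕ) :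
    ∑ i ∈ range k, s ^ i ≡ ∑ i ∈ range l, s ^ i [MOD p ^ n] ↔ k ≡ l [MOD p ^ n] := by
  wlog hkl : k ≤ l generalizing k l
  · exact Nat.ModEq.comm.trans ((this l k (le_of_not_ge hkl)).trans Nat.ModEq.comm)
  obtain ⟨m, rfl⟩ := Nat.exists_eq_add_of_le hkl
  have hsplit : ∑ i ∈ range (k + m), s ^ i =
      ∑ i ∈ range k, s ^ i + s ^ k * ∑ i ∈ range m, s ^ i := by
    simp only [sum_range_add, pow_add, mul_sum]
  have hcop : (p ^ n).Coprime (s ^ k) :=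
    .pow _ _ <| (Nat.Prime.coprime_iff_not_dvd hp).mpr fun h ↦
      not_dvd_of_dvd_sub_one hp hs (Int.natCast_dvd_natCast.mpr h)
  calc _ ↔ p ^ n ∣ s ^ k * ∑ i ∈ range m, s ^ i := by
        rw [Nat.modEq_iff_dvd' (hsplit ▸ Nat.le_add_right _ _), hsplit, Nat.add_sub_cancel_left]
    _ ↔ p ^ n ∣ m := hcop.dvd_mul_left.trans (pow_dvd_geom_sum_iff hp hp_odd hs n m)
    _ ↔ k ≡ k + m [MOD p ^ n] := by
        rw [Nat.modEq_iff_dvd' (Nat.le_add_right _ _), Nat.add_sub_cancel_left]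

end GeomSum

theorem circPow_eq_pow_geom_sum {γ : G → MulAut G} {a : G} {s : ℕ} (hs : γ a a = a ^ s)
    (k : ℕ) :
    circPow γ a k = a ^ ∑ i ∈ range k, s ^ i := by
  induction k with
  | zero => simp [circPow]
  | succ k ih => rw [circPow, circ, ih, map_pow, hs, ← pow_mul, geom_sum_succ, pow_succ]

theorem eq_one_of_isCoprime_sub_one {γ : G → MulAut G} {a : G} {s : ℕ}
    (hγ : ∀ x ∈ Subgroup.zpowers a, γ (γ a x * a) = γ a * γ x) (hs : γ a a = a ^ s)
    (hcop : IsCoprime ((s : ℤ) - 1) (orderOf a)) : γ a = 1 := by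
  obtain ⟨u, v, huv⟩ := hcop
  have hfix : γ a (a ^ (-u)) * a = a ^ (-u) := by
    rw [map_zpow, hs, ← zpow_natCast, ← zpow_mul, ← zpow_add_one,
      show (s : ℤ) * -u + 1 = -u + orderOf a * v by linear_combination -huv, zpow_add, zpow_mul,
      zpow_natCast, pow_orderOf_eq_one, one_zpow, mul_one]
  have h := hγ _ (zpow_mem (Subgroup.mem_zpowers a) (-u))
  rw [hfix] at h
  exact mul_eq_right.mp h.symm

theorem dvd_sub_one_of_orderOf_eq_prime_pow {γ : G → MulAut G} {a : G} {p n s : ℕ}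
    (hp : p.Prime) (hn : n ≠ 0) (ha : orderOf a = p ^ n)
    (hγ : ∀ x ∈ Subgroup.zpowers a, γ (γ a x * a) = γ a * γ x) (hs : γ a a = a ^ s) :
    (p : ℤ) ∣ s - 1 := by
  by_contra h
  have hcop : IsCoprime ((s : ℤ) - 1) (orderOf a) := by
    rw [ha, Nat.cast_pow]
    have hp' := (Nat.prime_iff_prime_int.mp hp).irreducible
    exact ((Irreducible.coprime_iff_not_dvd hp').mpr h).symm.pow_right
  have hγa := eq_one_of_isCoprime_sub_one hγ hs hcop
  have hpow : a ^ ((s : ℤ) - 1) = 1 := by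
    rw [zpow_sub_one, zpow_natCast, ← hs, hγa, MulAut.one_apply, mul_inv_cancel]
  refine h (dvd_trans ?_ (orderOf_dvd_iff_zpow_eq_one.mpr hpow))
  rw [ha, Nat.cast_pow]
  exact dvd_pow_self _ hn

theorem exists_pow_apply_eq_of_mem_zpowers {a : G} (ha : orderOf a ≠ 0) {f : ℕ → ℕ}
    (hf : ∀ k l, f k ≡ f l [MOD orderOf a] → k ≡ l [MOD orderOf a]) :
    ∀ x ∈ Subgroup.zpowers a, ∃ k, a ^ f k = x := by
  have : Finite (Subgroup.zpowers a) := Nat.finite_of_card_ne_zero (by rwa [Nat.card_zpowers])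
  let g : Fin (orderOf a) → Subgroup.zpowers a :=
    fun k ↦ ⟨a ^ f k, pow_mem (Subgroup.mem_zpowers a) _⟩
  have hg : Function.Injective g := fun k l hkl ↦
    Fin.ext <| (hf k l (pow_eq_pow_iff_modEq.mp (congrArg Subtype.val hkl))).eq_of_lt_of_lt k.2 l.2
  intro x hx
  obtain ⟨k, hk⟩ := (hg.bijective_of_nat_card_le (by simp [Nat.card_zpowers])).2 ⟨x, hx⟩
  exact ⟨k, congrArg Subtype.val hk⟩

theorem circ_powers_of_generator_general
    {G : Type u} [Group G] {p n : ℕ} (hp : p.Prime) (hp2 : p ≠ 2)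
    (a : G) (ha : orderOf a = p ^ n) (γ : G → MulAut G)
    (hγ : IsRGFOn (Subgroup.zpowers a) γ) (s : ℕ) (hs : γ a a = a ^ s) :
    (∀ k : ℕ, circPow γ a k = a ^ (∑ i ∈ Finset.range k, s ^ i)) ∧
    (∀ k : ℕ, circPow γ a k = 1 ↔ orderOf a ∣ k) ∧
    (∀ x ∈ Subgroup.zpowers a, ∃ k : ℕ, circPow γ a k = x) := by
  have hγa : ∀ x ∈ Subgroup.zpowers a, γ (γ a x * a) = γ a * γ x :=
    fun x hx ↦ hγ.2 x hx a (Subgroup.mem_zpowers a)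
  have hmod : ∀ k l, ∑ i ∈ range k, s ^ i ≡ ∑ i ∈ range l, s ^ i [MOD orderOf a] ↔
      k ≡ l [MOD orderOf a] := by
    rw [ha]
    rcases eq_or_ne n 0 with rfl | hn
    · simp [Nat.modEq_one]
    · exact geom_sum_modEq_geom_sum_iff hp (hp.odd_of_ne_two hp2)
        (dvd_sub_one_of_orderOf_eq_prime_pow hp hn ha hγa hs) n
  refine ⟨circPow_eq_pow_geom_sum hs, fun k ↦ ?_, fun x hx ↦ ?_⟩
  · simpa [circPow_eq_pow_geom_sum hs, pow_eq_one_iff_modEq, Nat.modEq_zero_iff_dvd]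
      using hmod k 0
  · obtain ⟨k, hk⟩ := exists_pow_apply_eq_of_mem_zpowers (ha ▸ (pow_pos hp.pos n).ne')
      (fun k l ↦ (hmod k l).mp) x hx
    exact ⟨k, (circPow_eq_pow_geom_sum hs k).trans hk⟩

/-- Corollary `cor:same_generator` of the paper.  If `A = ⟨a⟩` is
cyclic of order `pⁿ` (`p` odd), `γ` is an RGF on `A`, and `a^{γ(a)} = a^s`, then
`a^{∘k} = a^{e_s(k)}` with `e_s(k) = Σ_{i<k} sⁱ`; hence the order of `a` in `(A, ∘)`
equals the order of `a` in `A`, and `(A, ∘)` is generated by `a`. -/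
theorem circ_powers_of_generator
    {G : Type u} [Group G] [Finite G] {p n : ℕ} (hp : p.Prime) (hp2 : p ≠ 2)
    (a : G) (ha : orderOf a = p ^ n) (γ : G → MulAut G)
    (hγ : IsRGFOn (Subgroup.zpowers a) γ) (s : ℕ) (hs : γ a a = a ^ s) :
    (∀ k : ℕ, circPow γ a k = a ^ (∑ i ∈ Finset.range k, s ^ i)) ∧
    (∀ k : ℕ, circPow γ a k = 1 ↔ orderOf a ∣ k) ∧
    (∀ x ∈ Subgroup.zpowers a, ∃ k : ℕ, circPow γ a k = x) :=
  circ_powers_of_generator_general hp hp2 a ha γ hγ s hs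

end HGS
end

section
/- Let G be a finite group, p an odd prime, A = ⟨a⟩ a cyclic subgroup of G of order pⁿ, and γ : A → Aut(G) a relative gamma function; write a^{γ(a)} = a^s. Then γ is a group homomorphism from A (with its original operation) to Aut(G) if and only if s ≡ 1 modulo the order of γ(a). In particular, if γ(a) has order p, then γ is a homomorphism. -/
/- Formalization of results from "Hopf-Galois structures on extensions of degree p²q and
skew braces of order p²q: the cyclic Sylow p-subgroup case" (Campedel, Caranti, Del Corso).

Conventions: the paper composes permutations/automorphisms left-to-right and writes
`x^α` for the action; in Mathlib composition is right-to-left, so the paper's product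
`αβ` is rendered as `β * α`, the paper's `x^α` as `α x`, and the paper's conjugate
`α^β = β⁻¹αβ` as `β * α * β⁻¹`. -/

namespace HGS

universe u

variable {G : Type*} [Group G]

/-! The permutations `τ x : g ↦ γ x g * x` (`x ∈ A`) form a subgroup of `Perm G` of order `pⁿ`, and
the RGF equation gives `τ(a)^k = τ(a^[k])` and `γ(a^[k]) = γ(a)^k`, where
`[k] = 1 + s + ⋯ + s^(k-1)`. Lagrange bounds the order of `τ a`, whence `ord(γ a) ∣ pⁿ` and, by
Fermat, `s ≡ 1 (mod p)`. Lifting the exponent (`p` odd) then makes `k ↦ [k]` a bijection modulo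
`pⁿ`, so every power of `a` is some `a^[k]`, and `γ` is a homomorphism exactly when `[k]` may be
replaced by `k` modulo `ord(γ a)`, i.e. when `s ≡ 1 (mod ord(γ a))`. -/

open Finset

theorem geom_sum_modEq_self {d s : ℕ} (hs : s ≡ 1 [MOD d]) (k : ℕ) :
    ∑ i ∈ range k, s ^ i ≡ k [MOD d] := by
  rw [← ZMod.natCast_eq_natCast_iff] at hs ⊢
  push_cast
  simp [hs]

theorem modEq_one_of_dvd_geom_sum_prime_pow {p s j : ℕ} (hp : p.Prime)
    (h : p ∣ ∑ i ∈ range (p ^ j), s ^ i) : s ≡ 1 [MOD p] := by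
  have := Fact.mk hp
  have hsum : ((∑ i ∈ range (p ^ j), s ^ i : ℕ) : ZMod p) = 0 :=
    (ZMod.natCast_eq_zero_iff _ _).2 h
  have hgeom := geom_sum_mul (s : ZMod p) (p ^ j)
  push_cast at hsum
  rw [hsum, zero_mul, ZMod.pow_card_pow, eq_comm, sub_eq_zero] at hgeom
  rwa [← ZMod.natCast_eq_natCast_iff, Nat.cast_one]

theorem geom_sum_add {R : Type*} [Semiring R] (x : R) (j m : ℕ) :
    ∑ i ∈ range (j + m), x ^ i = ∑ i ∈ range j, x ^ i + x ^ j * ∑ i ∈ range m, x ^ i := by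
  rw [sum_range_add, mul_sum]
  simp only [pow_add]

section OddPrime

variable {p s : ℕ} [Fact p.Prime]

theorem padicValNat_geom_sum (hodd : Odd p) (hs : s ≡ 1 [MOD p]) {m : ℕ} (hm : m ≠ 0) :
    padicValNat p (∑ i ∈ range m, s ^ i) = padicValNat p m := by
  have hp := (Fact.out : p.Prime)
  have hndvd : ¬ p ∣ s := by
    rw [Nat.dvd_iff_mod_eq_zero, hs, Nat.mod_eq_of_lt hp.one_lt]
    exact one_ne_zero
  have hs1 : 1 ≤ s := Nat.pos_of_ne_zero (by rintro rfl; exact hndvd (dvd_zero p))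
  obtain rfl | hs1 := hs1.eq_or_lt
  · simp
  have hsub : p ∣ s - 1 := (Nat.modEq_iff_dvd' hs1.le).1 hs.symm
  have hlte := padicValNat.pow_sub_pow hodd hs1 hsub hndvd hm
  rw [one_pow, ← geom_sum_mul_of_one_le hs1.le, padicValNat.mul _ (by omega)] at hlte
  · omega
  · exact (geom_sum_pos (Nat.zero_le s) hm).ne'

theorem pow_dvd_of_pow_dvd_geom_sum (hodd : Odd p) (hs : s ≡ 1 [MOD p]) {n m : ℕ}
    (h : p ^ n ∣ ∑ i ∈ range m, s ^ i) : p ^ n ∣ m := by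
  rcases eq_or_ne m 0 with rfl | hm
  · exact dvd_zero _
  rw [padicValNat_dvd_iff_le hm, ← padicValNat_geom_sum hodd hs hm]
  exact (padicValNat_dvd_iff_le (geom_sum_pos (Nat.zero_le s) hm).ne').1 h

theorem modEq_of_geom_sum_modEq (hodd : Odd p) (hs : s ≡ 1 [MOD p]) {n j k : ℕ}
    (h : ∑ i ∈ range j, s ^ i ≡ ∑ i ∈ range k, s ^ i [MOD p ^ n]) : j ≡ k [MOD p ^ n] := by
  wlog hjk : j ≤ k generalizing j k
  · exact (this h.symm (le_of_not_ge hjk)).symm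
  obtain ⟨m, rfl⟩ := Nat.exists_eq_add_of_le hjk
  have hcop : (p ^ n).Coprime (s ^ j) :=
    Nat.Coprime.pow n j (Nat.Coprime.symm (hs.gcd_eq.trans (Nat.gcd_one_left p)))
  rw [geom_sum_add, ← add_zero (∑ i ∈ range j, s ^ i), add_assoc, zero_add] at h
  have hdvd : p ^ n ∣ s ^ j * ∑ i ∈ range m, s ^ i :=
    Nat.modEq_zero_iff_dvd.1 (Nat.ModEq.add_left_cancel' _ h.symm)
  have hm := pow_dvd_of_pow_dvd_geom_sum hodd hs (hcop.dvd_of_dvd_mul_left hdvd)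
  simpa using (Nat.modEq_zero_iff_dvd.2 hm).symm.add_left j

theorem exists_geom_sum_modEq (hodd : Odd p) (hs : s ≡ 1 [MOD p]) (n m : ℕ) :
    ∃ k, ∑ i ∈ range k, s ^ i ≡ m [MOD p ^ n] := by
  have hpos : 0 < p ^ n := pow_pos (Fact.out : p.Prime).pos n
  let f : Fin (p ^ n) → Fin (p ^ n) := fun k => ⟨(∑ i ∈ range k, s ^ i) % p ^ n, Nat.mod_lt _ hpos⟩
  have hf : Function.Injective f := fun j k hjk =>
    Fin.ext ((modEq_of_geom_sum_modEq hodd hs (Fin.val_eq_of_eq hjk)).eq_of_lt_of_lt j.2 k.2)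
  obtain ⟨k, hk⟩ := Finite.injective_iff_surjective.1 hf ⟨m % p ^ n, Nat.mod_lt _ hpos⟩
  exact ⟨k, Fin.val_eq_of_eq hk⟩

end OddPrime

/-- The action on `G` of the element `(x, γ x)` of the holomorph `G ⋊ Aut G`. -/
def rgfPerm (γ : G → MulAut G) (x : G) : Equiv.Perm G :=
  (γ x).toEquiv.trans (Equiv.mulRight x)

@[simp]
theorem rgfPerm_apply (γ : G → MulAut G) (x g : G) : rgfPerm γ x g = γ x g * x := rfl

theorem rgfPerm_injective (γ : G → MulAut G) : Function.Injective (rgfPerm γ) := fun x y h => by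
  simpa using DFunLike.congr_fun h 1

namespace IsRGFOn

variable {A : Subgroup G} {γ : G → MulAut G}

theorem map_one (hγ : IsRGFOn A γ) : γ 1 = 1 := by
  simpa using hγ.2 1 A.one_mem 1 A.one_mem

theorem rgfPerm_one (hγ : IsRGFOn A γ) : rgfPerm γ 1 = 1 := by
  ext g
  simp [hγ.map_one]

theorem rgfPerm_mul (hγ : IsRGFOn A γ) {x y : G} (hx : x ∈ A) (hy : y ∈ A) :
    rgfPerm γ x * rgfPerm γ y = rgfPerm γ (γ x y * x) := by
  ext g
  simp [hγ.2 y hy x hx, mul_assoc]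

def rgfPermSubmonoid (hγ : IsRGFOn A γ) : Submonoid (Equiv.Perm G) where
  carrier := rgfPerm γ '' A
  one_mem' := ⟨1, A.one_mem, hγ.rgfPerm_one⟩
  mul_mem' := by
    rintro _ _ ⟨x, hx, rfl⟩ ⟨y, hy, rfl⟩
    exact ⟨γ x y * x, A.mul_mem (hγ.1 y hy x hx) hx, (hγ.rgfPerm_mul hx hy).symm⟩

def rgfPermSubgroup [Finite G] (hγ : IsRGFOn A γ) : Subgroup (Equiv.Perm G) where
  toSubmonoid := hγ.rgfPermSubmonoid
  inv_mem' {σ} hσ := by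
    rw [← one_mul σ⁻¹, ← pow_one σ, ← pow_orderOf_eq_one σ, ← pow_sub σ (orderOf_pos σ)]
    exact hγ.rgfPermSubmonoid.pow_mem hσ _

theorem card_rgfPermSubgroup [Finite G] (hγ : IsRGFOn A γ) :
    Nat.card hγ.rgfPermSubgroup = Nat.card A :=
  Nat.card_image_of_injective (rgfPerm_injective γ) A

theorem rgfPerm_mem_rgfPermSubgroup [Finite G] (hγ : IsRGFOn A γ) {x : G} (hx : x ∈ A) :
    rgfPerm γ x ∈ hγ.rgfPermSubgroup :=
  ⟨x, hx, rfl⟩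

section Cyclic

variable {a : G} (hγ : IsRGFOn (Subgroup.zpowers a) γ)
include hγ

theorem orderOf_rgfPerm_dvd [Finite G] : orderOf (rgfPerm γ a) ∣ orderOf a := by
  rw [← Nat.card_zpowers a, ← hγ.card_rgfPermSubgroup]
  exact Subgroup.orderOf_dvd_natCard _ (hγ.rgfPerm_mem_rgfPermSubgroup (Subgroup.mem_zpowers a))

theorem map_mul_iff_map_pow [Finite G] :
    (∀ x ∈ Subgroup.zpowers a, ∀ y ∈ Subgroup.zpowers a, γ (x * y) = γ y * γ x) ↔
      ∀ m : ℕ, γ (a ^ m) = γ a ^ m := by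
  constructor
  · intro H m
    induction m with
    | zero => simp [hγ.map_one]
    | succ m ih =>
      rw [pow_succ, H _ (pow_mem (Subgroup.mem_zpowers a) m) _ (Subgroup.mem_zpowers a), ih,
        pow_succ']
  · rintro H _ hx _ hy
    obtain ⟨i, rfl⟩ := mem_powers_iff_mem_zpowers.2 hx
    obtain ⟨j, rfl⟩ := mem_powers_iff_mem_zpowers.2 hy
    rw [← pow_add, H, H, H, ← pow_add, add_comm]

variable {s : ℕ} (hs : γ a a = a ^ s)
include hs

theorem map_pow_geom_sum (k : ℕ) : γ (a ^ ∑ i ∈ range k, s ^ i) = γ a ^ k := by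
  induction k with
  | zero => simp [hγ.map_one]
  | succ k ih =>
    rw [geom_sum_succ, pow_succ, pow_mul, ← hs, ← map_pow,
      hγ.2 _ (pow_mem (Subgroup.mem_zpowers a) _) a (Subgroup.mem_zpowers a), ih, pow_succ']

theorem rgfPerm_pow (k : ℕ) : rgfPerm γ a ^ k = rgfPerm γ (a ^ ∑ i ∈ range k, s ^ i) := by
  induction k with
  | zero => simp [hγ.rgfPerm_one]
  | succ k ih =>
    rw [pow_succ', ih,
      hγ.rgfPerm_mul (Subgroup.mem_zpowers a) (pow_mem (Subgroup.mem_zpowers a) _), geom_sum_succ,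
      pow_succ, pow_mul, ← hs, ← map_pow]

theorem pow_geom_sum_orderOf_rgfPerm : a ^ (∑ i ∈ range (orderOf (rgfPerm γ a)), s ^ i) = 1 :=
  rgfPerm_injective γ (by rw [← hγ.rgfPerm_pow hs, pow_orderOf_eq_one, hγ.rgfPerm_one])

theorem orderOf_dvd_orderOf [Finite G] : orderOf (γ a) ∣ orderOf a :=
  (orderOf_dvd_of_pow_eq_one (by
    rw [← hγ.map_pow_geom_sum hs, hγ.pow_geom_sum_orderOf_rgfPerm hs, hγ.map_one])).trans
    hγ.orderOf_rgfPerm_dvd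

theorem modEq_one_of_orderOf_eq_prime_pow [Finite G] {p n : ℕ} (hp : p.Prime)
    (ha : orderOf a = p ^ n) (hn : n ≠ 0) : s ≡ 1 [MOD p] := by
  obtain ⟨j, -, hj⟩ := (Nat.dvd_prime_pow hp).1 (ha ▸ hγ.orderOf_rgfPerm_dvd)
  refine modEq_one_of_dvd_geom_sum_prime_pow hp (j := j) ?_
  rw [← hj]
  exact (dvd_pow_self p hn).trans
    (ha ▸ orderOf_dvd_of_pow_eq_one (hγ.pow_geom_sum_orderOf_rgfPerm hs))

theorem exists_geom_sum_modEq_orderOf [Finite G] {p n : ℕ} (hp : p.Prime) (hodd : Odd p)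
    (ha : orderOf a = p ^ n) (m : ℕ) : ∃ k, ∑ i ∈ range k, s ^ i ≡ m [MOD orderOf a] := by
  rw [ha]
  rcases eq_or_ne n 0 with rfl | hn
  · exact ⟨0, Nat.modEq_one⟩
  have := Fact.mk hp
  exact exists_geom_sum_modEq hodd (hγ.modEq_one_of_orderOf_eq_prime_pow hs hp ha hn) n m

theorem modEq_one_of_map_pow (H : ∀ m : ℕ, γ (a ^ m) = γ a ^ m) : s ≡ 1 [MOD orderOf (γ a)] := by
  have h := hγ.2 a (Subgroup.mem_zpowers a) a (Subgroup.mem_zpowers a)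
  rw [hs, ← pow_succ, H, ← pow_two] at h
  exact Nat.ModEq.add_right_cancel' 1 (pow_eq_pow_iff_modEq.1 h)

theorem map_pow_of_modEq [Finite G] {p n : ℕ} (hp : p.Prime) (hodd : Odd p)
    (ha : orderOf a = p ^ n) (hmod : s ≡ 1 [MOD orderOf (γ a)]) (m : ℕ) :
    γ (a ^ m) = γ a ^ m := by
  obtain ⟨k, hk⟩ := hγ.exists_geom_sum_modEq_orderOf hs hp hodd ha m
  calc γ (a ^ m) = γ (a ^ ∑ i ∈ range k, s ^ i) := by rw [pow_eq_pow_iff_modEq.2 hk.symm]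
    _ = γ a ^ k := hγ.map_pow_geom_sum hs k
    _ = γ a ^ m := pow_eq_pow_iff_modEq.2
      ((geom_sum_modEq_self hmod k).symm.trans (hk.of_dvd (hγ.orderOf_dvd_orderOf hs)))

end Cyclic

end IsRGFOn

/-- Corollaries `cor:morA` and `cor:ordp` of the paper.  If `A = ⟨a⟩`
is cyclic of order `pⁿ` (`p` odd), `γ` an RGF on `A`, and `a^{γ(a)} = a^s`, then `γ` is a
homomorphism on `A` iff `s ≡ 1 (mod ord(γ a))`; in particular if `ord(γ a) = p` then `γ`
is a homomorphism.  (Since `A` is abelian, the homomorphism condition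
`γ(xy) = γ(x)γ(y)` may equivalently be written with either composition order.) -/
theorem rgf_morphism_iff_congruence
    {G : Type u} [Group G] [Finite G] {p n : ℕ} (hp : p.Prime) (hp2 : p ≠ 2)
    (a : G) (ha : orderOf a = p ^ n) (γ : G → MulAut G)
    (hγ : IsRGFOn (Subgroup.zpowers a) γ) (s : ℕ) (hs : γ a a = a ^ s) :
    ((∀ x ∈ Subgroup.zpowers a, ∀ y ∈ Subgroup.zpowers a, γ (x * y) = γ y * γ x) ↔
      s ≡ 1 [MOD orderOf (γ a)]) ∧
    (orderOf (γ a) = p →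
      ∀ x ∈ Subgroup.zpowers a, ∀ y ∈ Subgroup.zpowers a, γ (x * y) = γ y * γ x) := by
  have hodd := hp.odd_of_ne_two hp2
  have hiff := hγ.map_mul_iff_map_pow.trans
    ⟨hγ.modEq_one_of_map_pow hs, hγ.map_pow_of_modEq hs hp hodd ha⟩
  refine ⟨hiff, fun hord => hiff.2 (hord ▸ hγ.modEq_one_of_orderOf_eq_prime_pow hs hp ha ?_)⟩
  rintro rfl
  have h := hγ.orderOf_dvd_orderOf hs
  rw [hord, ha, pow_zero] at h
  exact hp.one_lt.ne' (Nat.dvd_one.1 h)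

end HGS
end

section
/- Let p > 2 be a prime and s an integer with s ≡ 1 (mod p). Define e_s(0) = 0 and e_s(k) = Σ_{i=0}^{k−1} s^i for k > 0. Then for every n ∈ ℕ, the set { e_s(0), e_s(1), …, e_s(pⁿ−1) } is a complete set of representatives of the residue classes modulo pⁿ; equivalently, for all integers k, h ≥ 0, e_s(k) ≡ e_s(h) (mod pⁿ) if and only if k ≡ h (mod pⁿ). -/
/-!
Since `e_s(h + d) - e_s(h) = s ^ h * e_s(d)` and `s` is prime to `p`, everything reduces to
`v_p(e_s(d)) = v_p(d)`. For `s ≠ 1` this is lifting the exponent applied to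
`s ^ d - 1 = e_s(d) * (s - 1)`, which is where `p` odd is needed (for `p = 2`, `s = 3`
gives `e_s(2) = 4`).
-/

namespace HGS

open Finset

theorem not_natCast_dvd_of_dvd_sub_one {p : ℕ} (hp : p.Prime) {s : ℤ} (hs : (p : ℤ) ∣ s - 1) :
    ¬(p : ℤ) ∣ s := by
  rw [dvd_iff_dvd_of_dvd_sub hs, Int.natCast_dvd_ofNat, Nat.dvd_one]
  exact hp.ne_one

theorem emultiplicity_geom_sum_of_dvd_sub_one {p : ℕ} (hp : p.Prime) (hp1 : Odd p) {s : ℤ}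
    (hs : (p : ℤ) ∣ s - 1) (m : ℕ) :
    emultiplicity (p : ℤ) (∑ i ∈ range m, s ^ i) = emultiplicity p m := by
  rcases eq_or_ne s 1 with rfl | hs1
  · simp [Int.natCast_emultiplicity]
  have hfin : emultiplicity (p : ℤ) (s - 1) ≠ ⊤ := finiteMultiplicity_iff_emultiplicity_ne_top.mp <|
    Int.finiteMultiplicity_iff.mpr ⟨by simpa using hp.ne_one, sub_ne_zero.mpr hs1⟩
  have hlte := Int.emultiplicity_pow_sub_pow hp hp1 hs (not_natCast_dvd_of_dvd_sub_one hp hs) m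
  rw [one_pow, ← geom_sum_mul, emultiplicity_mul (Nat.prime_iff_prime_int.mp hp),
    add_comm _ (emultiplicity _ (m : ℕ))] at hlte
  exact WithTop.add_right_cancel hfin hlte

theorem natCast_pow_dvd_geom_sum_iff {p : ℕ} (hp : p.Prime) (hp1 : Odd p) {s : ℤ}
    (hs : (p : ℤ) ∣ s - 1) (n m : ℕ) :
    (p : ℤ) ^ n ∣ ∑ i ∈ range m, s ^ i ↔ p ^ n ∣ m := by
  rw [pow_dvd_iff_le_emultiplicity, emultiplicity_geom_sum_of_dvd_sub_one hp hp1 hs,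
    ← pow_dvd_iff_le_emultiplicity]

theorem geom_sum_range_add_sub (s : ℤ) (h d : ℕ) :
    ∑ i ∈ range (h + d), s ^ i - ∑ i ∈ range h, s ^ i = s ^ h * ∑ i ∈ range d, s ^ i := by
  rw [sum_range_add, add_sub_cancel_left, mul_sum]
  simp only [pow_add]

theorem geom_sum_add_modEq_iff {p : ℕ} (hp : p.Prime) (hp1 : Odd p) {s : ℤ}
    (hs : (p : ℤ) ∣ s - 1) (n h d : ℕ) :
    ∑ i ∈ range h, s ^ i ≡ ∑ i ∈ range (h + d), s ^ i [ZMOD (p : ℤ) ^ n] ↔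
      h ≡ h + d [MOD p ^ n] := by
  have hcop : IsCoprime ((p : ℤ) ^ n) (s ^ h) := by
    obtain ⟨c, hc⟩ := hs
    exact IsCoprime.pow ⟨-c, 1, by linarith⟩
  rw [Int.modEq_iff_dvd, geom_sum_range_add_sub, Nat.ModEq.comm, Nat.add_modEq_left_iff,
    ← natCast_pow_dvd_geom_sum_iff hp hp1 hs]
  exact ⟨hcop.dvd_of_dvd_mul_left, (Dvd.dvd.mul_left · _)⟩

/-- Lemma `lemma:arithmetic2` of the paper.  For `p > 2` prime and
`s ≡ 1 (mod p)`, the sums `e_s(k) = Σ_{i<k} sⁱ` for `0 ≤ k < pⁿ` form a complete set of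
representatives modulo `pⁿ`; equivalently `e_s(k) ≡ e_s(h) (mod pⁿ) ↔ k ≡ h (mod pⁿ)`. -/
theorem geometric_sums_complete_residues
    {p : ℕ} (hp : p.Prime) (hp2 : 2 < p) (s : ℤ) (hs : s ≡ 1 [ZMOD (p : ℤ)]) :
    ∀ n k h : ℕ,
      ((∑ i ∈ Finset.range k, s ^ i) ≡ (∑ i ∈ Finset.range h, s ^ i)
          [ZMOD ((p : ℤ) ^ n)]) ↔
        k ≡ h [MOD p ^ n] := by
  intro n k h
  have hp1 : Odd p := hp.odd_of_ne_two hp2.ne'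
  have hs_dvd : (p : ℤ) ∣ s - 1 := Int.ModEq.dvd hs.symm
  rcases le_total h k with hhk | hkh
  · obtain ⟨d, rfl⟩ := Nat.exists_eq_add_of_le hhk
    rw [Int.modEq_comm, Nat.ModEq.comm]
    exact geom_sum_add_modEq_iff hp hp1 hs_dvd n h d
  · obtain ⟨d, rfl⟩ := Nat.exists_eq_add_of_le hkh
    exact geom_sum_add_modEq_iff hp hp1 hs_dvd n k d

end HGS
end

section
/- Let G be a finite group, γ a gamma function on G, N = { γ(h)·ρ(h) : h ∈ G } the associated regular subgroup of Hol(G), and ∘ the associated operation. Define γ̃(x) = γ(x⁻¹)·ι(x⁻¹) for x ∈ G, where ι(g) is conjugation x ↦ g⁻¹xg. Then γ̃ is a gamma function on G, whose associated regular subgroup is the conjugate N^{inv} of N by the inversion permutation inv : x ↦ x⁻¹ of G; moreover, if ∘̃ is the operation associated to γ̃, then inv : (G,∘) → (G,∘̃) is a group isomorphism. -/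
/- Everything reduces to the identity `γ̃(h) g · h = h · γ(h⁻¹) g`: it says that the circle
operation of `γ̃` is the circle operation of `γ` transported along inversion, and the gamma
equation for `γ̃` is the gamma equation for `γ` at `(g⁻¹, h⁻¹)` once the inner automorphisms
are moved past `γ(h⁻¹)` using `ι(φ g) φ = φ ι(g)` for `φ ∈ Aut G`. -/

/- Formalization of results from "Hopf-Galois structures on extensions of degree p²q and
skew braces of order p²q: the cyclic Sylow p-subgroup case" (Campedel, Caranti, Del Corso).

Conventions: the paper composes permutations/automorphisms left-to-right and writes
`x^α` for the action; in Mathlib composition is right-to-left, so the paper's product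
`αβ` is rendered as `β * α`, the paper's `x^α` as `α x`, and the paper's conjugate
`α^β = β⁻¹αβ` as `β * α * β⁻¹`. -/

namespace HGS

universe u v

variable {G : Type*} [Group G]

/-- `nu γ h` is the permutation `ν(h) = γ(h)ρ(h) : x ↦ (γ h x) * h`. -/
def nu (γ : G → MulAut G) (h : G) : Equiv.Perm G :=
  rhoPerm h * (γ h).toEquiv

/-- The dual `γ̃(x) = γ(x⁻¹) ι(x⁻¹)` of `γ`, written in Mathlib's composition order. -/
def gammaTilde (γ : G → MulAut G) (x : G) : MulAut G := MulAut.conj x * γ x⁻¹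

theorem gammaTilde_apply_mul (γ : G → MulAut G) (g h : G) :
    gammaTilde γ h g * h = h * γ h⁻¹ g := by
  simp [gammaTilde, mul_assoc]

theorem circ_gammaTilde_inv (γ : G → MulAut G) (x y : G) :
    circ (gammaTilde γ) x⁻¹ y⁻¹ = (circ γ x y)⁻¹ := by
  rw [circ, gammaTilde_apply_mul, inv_inv, map_inv, circ, mul_inv_rev]

theorem nu_apply (γ : G → MulAut G) (h x : G) : nu γ h x = circ γ x h := rfl

theorem nu_gammaTilde_inv (γ : G → MulAut G) (y : G) :
    nu (gammaTilde γ) y⁻¹ = Equiv.inv G * nu γ y * (Equiv.inv G)⁻¹ := by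
  ext x
  rw [nu_apply, Equiv.Perm.mul_apply, Equiv.Perm.mul_apply, nu_apply, Equiv.Perm.inv_def,
    Equiv.inv_symm, Equiv.inv_apply, ← circ_gammaTilde_inv, inv_inv]

theorem conj_map_mul_eq_mul_conj (φ : MulAut G) (g : G) :
    MulAut.conj (φ g) * φ = φ * MulAut.conj g := by
  ext x
  simp

theorem IsGammaFunction.gammaTilde {γ : G → MulAut G} (hγ : IsGammaFunction γ) :
    IsGammaFunction (gammaTilde γ) := by
  intro g h
  rw [gammaTilde_apply_mul]
  simp only [HGS.gammaTilde]
  rw [mul_inv_rev, ← map_inv, hγ g⁻¹ h⁻¹]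
  simp only [map_mul, mul_assoc]
  rw [← mul_assoc (MulAut.conj (γ h⁻¹ g)), conj_map_mul_eq_mul_conj, mul_assoc]

theorem duality_gammatilde_general
    {G : Type u} [Group G] (γ : G → MulAut G) (hγ : IsGammaFunction γ)
    (γt : G → MulAut G) (hγt : ∀ x : G, γt x = MulAut.conj x * γ x⁻¹) :
    IsGammaFunction γt ∧
    (∀ y : G, nu γt y⁻¹ = Equiv.inv G * nu γ y * (Equiv.inv G)⁻¹) ∧
    (∀ x y : G, (circ γ x y)⁻¹ = circ γt x⁻¹ y⁻¹) := by
  obtain rfl : γt = gammaTilde γ := funext hγt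
  exact ⟨hγ.gammaTilde, nu_gammaTilde_inv γ, fun x y => (circ_gammaTilde_inv γ x y).symm⟩

/-- Proposition `prop:gammatilde` of the paper: duality.  Given a
gamma function `γ` with associated regular subgroup `N = {γ(h)ρ(h) : h ∈ G}` and circle
operation `∘`, the map `γ̃(x) = γ(x⁻¹)ι(x⁻¹)` (in Mathlib's order,
`γ̃ x = MulAut.conj x * γ x⁻¹`, i.e. `y ↦ x · (γ x⁻¹ y) · x⁻¹`) is a gamma function; its
associated regular subgroup is the conjugate of `N` by the inversion permutation
(elementwise, `ν̃(y⁻¹) = inv ∘ ν(y) ∘ inv⁻¹`), and `inv : (G,∘) → (G,∘̃)` is an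
isomorphism, i.e. `(x ∘ y)⁻¹ = x⁻¹ ∘̃ y⁻¹`. -/
theorem duality_gammatilde
    {G : Type u} [Group G] [Finite G] (γ : G → MulAut G) (hγ : IsGammaFunction γ)
    (γt : G → MulAut G) (hγt : ∀ x : G, γt x = MulAut.conj x * γ x⁻¹) :
    IsGammaFunction γt ∧
    (∀ y : G, nu γt y⁻¹ = Equiv.inv G * nu γ y * (Equiv.inv G)⁻¹) ∧
    (∀ x y : G, (circ γ x y)⁻¹ = circ γt x⁻¹ y⁻¹) :=
  duality_gammatilde_general γ hγ γt hγt

end HGS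
end

section
/- Let G be a finite non-abelian group and C a non-trivial subgroup of G such that C is abelian, C is characteristic in G, and C ∩ Z(G) = {1}. Let γ be a gamma function on G and suppose that for every c ∈ C we have γ(c) = ι(c^{−σ}) for some function σ : C → C. Then σ is an endomorphism of C, and for every a ∈ G the relation σ · (γ(a)|_C) · (σ − 1) = (σ − 1) · (γ(a)|_C) · (ι(a)|_C) · σ holds in the endomorphism ring End(C). -/
/-! Conventions: the paper composes permutations/automorphisms left-to-right and writes
`x^α` for the action; in Mathlib composition is right-to-left, so the paper's product
`αβ` is rendered as `β * α`, the paper's `x^α` as `α x`, and the paper's conjugate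
`α^β = β⁻¹αβ` as `β * α * β⁻¹`.

Since `C ∩ Z(G) = 1`, conjugation is injective on `C`, so every identity between values of
`γ` at elements of `C` yields an identity for `σ`. The gamma functional equation at
`c₁, c₂ ∈ C` (where `γ(c₂)` fixes `c₁`, as `C` is abelian) makes `σ` multiplicative. For the
second identity, write `A = γ(a)` and `b = (a⁻¹)^{A⁻¹}`, so that `γ(b) = A⁻¹`; applying the
functional equation twice, `γ(b ∘ (c ∘ a)) = ι(A(σ c))`, where `b ∘ (c ∘ a) = u w` with
`u = A(σ c)` and `w = (A((σ c)⁻¹ c))^a`, both in `C`. Hence `σ(u w) = u`, i.e.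
`σ(w) = σ(u)⁻¹ u`, which is the claimed identity evaluated at `c`. -/

namespace HGS

universe u v

variable {G : Type*} [Group G]

theorem mulAut_conj_eq_one_iff {x : G} : MulAut.conj x = 1 ↔ x ∈ Subgroup.center G := by
  rw [Subgroup.mem_center_iff, DFunLike.ext_iff]
  refine forall_congr' fun g => ?_
  rw [MulAut.conj_apply, MulAut.one_apply, mul_inv_eq_iff_eq_mul, eq_comm]

theorem mulAut_conj_injOn_of_inf_center_eq_bot {C : Subgroup G}
    (hCZ : C ⊓ Subgroup.center G = ⊥) : Set.InjOn MulAut.conj (C : Set G) := by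
  intro u hu v hv huv
  have hcentral : v⁻¹ * u ∈ C ⊓ Subgroup.center G := by
    refine ⟨C.mul_mem (C.inv_mem hv) hu, mulAut_conj_eq_one_iff.mp ?_⟩
    rw [map_mul, map_inv, huv, inv_mul_cancel]
  rw [hCZ, Subgroup.mem_bot, inv_mul_eq_one] at hcentral
  exact hcentral.symm

namespace IsGammaFunction

variable {γ : G → MulAut G}

theorem map_one_s15 (hγ : IsGammaFunction γ) : γ 1 = 1 := by
  simpa using hγ 1 1

theorem apply_symm_inv (hγ : IsGammaFunction γ) (a : G) :
    γ ((γ a)⁻¹ a⁻¹) = (γ a)⁻¹ := by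
  have h := hγ ((γ a)⁻¹ a⁻¹) a
  rw [MulAut.apply_inv_self, inv_mul_cancel, hγ.map_one_s15] at h
  exact (inv_eq_of_mul_eq_one_right h.symm).symm

/-- The element in the argument is `b ∘ (c ∘ a)` for `b = (a⁻¹)^{γ(a)⁻¹}`, so its `γ` is
`γ(a)⁻¹` conjugated by `γ(c ∘ a) = ι(s) γ(a)`. -/
theorem apply_conj_eq (hγ : IsGammaFunction γ) {c s : G} (hcs : γ c = MulAut.conj s)
    (a : G) :
    γ (γ a s * (a⁻¹ * γ a (s⁻¹ * c) * a)) = MulAut.conj (γ a s) := by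
  have hca : γ (γ a c * a) = γ a * MulAut.conj s := by rw [hγ, hcs]
  have h := hγ ((γ a)⁻¹ a⁻¹) (γ a c * a)
  rw [hca, hγ.apply_symm_inv] at h
  convert h using 2
  · simp only [MulAut.mul_apply, MulAut.conj_apply, map_mul, map_inv, MulAut.apply_inv_self]
    group
  · ext x
    simp [MulAut.conj_apply]

end IsGammaFunction

theorem map_inv_of_map_mul {C : Subgroup G} {f : G → G}
    (hf : ∀ x ∈ C, ∀ y ∈ C, f (x * y) = f x * f y) {c : G} (hc : c ∈ C) : f c⁻¹ = (f c)⁻¹ := by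
  have hf1 : f 1 = 1 := by simpa using hf 1 C.one_mem 1 C.one_mem
  rw [eq_inv_iff_mul_eq_one, ← hf _ (C.inv_mem hc) _ hc, inv_mul_cancel, hf1]

theorem sigma_map_mul {C : Subgroup G} {γ : G → MulAut G} {σ : G → G}
    (hCab : ∀ x ∈ C, ∀ y ∈ C, x * y = y * x) (hinj : Set.InjOn MulAut.conj (C : Set G))
    (hγ : IsGammaFunction γ) (hσC : ∀ c ∈ C, σ c ∈ C)
    (hγσ : ∀ c ∈ C, γ c = MulAut.conj (σ c)) :
    ∀ c₁ ∈ C, ∀ c₂ ∈ C, σ (c₁ * c₂) = σ c₁ * σ c₂ := by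
  intro c₁ h₁ c₂ h₂
  have hfix : γ c₂ c₁ = c₁ := by
    rw [hγσ c₂ h₂, MulAut.conj_apply, hCab _ (hσC c₂ h₂) _ h₁, mul_inv_cancel_right]
  have hconj : MulAut.conj (σ (c₁ * c₂)) = MulAut.conj (σ c₂ * σ c₁) := by
    have h := hγ c₁ c₂
    rw [hfix] at h
    rw [← hγσ _ (C.mul_mem h₁ h₂), h, hγσ c₁ h₁, hγσ c₂ h₂, map_mul]
  rw [hinj (hσC _ (C.mul_mem h₁ h₂)) (C.mul_mem (hσC c₂ h₂) (hσC c₁ h₁)) hconj,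
    hCab _ (hσC c₂ h₂) _ (hσC c₁ h₁)]

/-- Here `ι(g)` is the inner automorphism `x ↦ g⁻¹ x g`, so the hypothesis `γ(c) = ι(c^{-σ})`
reads `γ c = MulAut.conj (σ c)`. The identity `σ γ(a)|_C (σ - 1) = (σ - 1) γ(a)|_C ι(a)|_C σ`
of `End C` is rendered pointwise on `C`, with `x^{σ-1} = (σ x) x⁻¹`. -/
theorem sigma_endomorphism_relation_general
    {G : Type u} [Group G]
    (C : Subgroup G)
    (hCab : ∀ x ∈ C, ∀ y ∈ C, x * y = y * x)
    (hCchar : C.Characteristic)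
    (hCZ : C ⊓ Subgroup.center G = ⊥)
    (γ : G → MulAut G) (hγ : IsGammaFunction γ)
    (σ : G → G) (hσC : ∀ c ∈ C, σ c ∈ C)
    (hγσ : ∀ c ∈ C, γ c = MulAut.conj (σ c)) :
    (∀ c₁ ∈ C, ∀ c₂ ∈ C, σ (c₁ * c₂) = σ c₁ * σ c₂) ∧
    (∀ a : G, ∀ c ∈ C,
      σ (γ a (σ c)) * (γ a (σ c))⁻¹ = σ (a⁻¹ * γ a (σ c * c⁻¹) * a)) := by
  have hinj := mulAut_conj_injOn_of_inf_center_eq_bot hCZ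
  have hmul := sigma_map_mul hCab hinj hγ hσC hγσ
  refine ⟨hmul, fun a c hc => ?_⟩
  have hchar : ∀ x ∈ C, γ a x ∈ C := fun x hx =>
    Subgroup.characteristic_iff_le_comap.mp hCchar (γ a) hx
  set u := γ a (σ c)
  set w := a⁻¹ * γ a ((σ c)⁻¹ * c) * a with hw_def
  have hu : u ∈ C := hchar _ (hσC c hc)
  have hw : w ∈ C := by
    simpa only [inv_inv] using (Subgroup.normal_of_characteristic C).conj_mem _
      (hchar _ (C.mul_mem (C.inv_mem (hσC c hc)) hc)) a⁻¹
  have hσuw : σ (u * w) = u := hinj (hσC _ (C.mul_mem hu hw)) hu <| by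
    rw [← hγσ _ (C.mul_mem hu hw), hγ.apply_conj_eq (hγσ c hc)]
  have hwinv : a⁻¹ * γ a (σ c * c⁻¹) * a = w⁻¹ := by
    rw [hCab _ (hσC c hc) _ (C.inv_mem hc), ← inv_inv (σ c), ← mul_inv_rev, map_inv, hw_def]
    group
  have hσw : σ w = (σ u)⁻¹ * u := eq_inv_mul_of_mul_eq ((hmul u hu w hw).symm.trans hσuw)
  rw [hwinv, map_inv_of_map_mul hmul hw, hσw, mul_inv_rev, inv_inv]
  exact hCab _ (hσC u hu) _ (C.inv_mem hu)

/-- Lemma `lemma:duality` of the paper.  Here `ι(g)` is the inner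
automorphism `x ↦ g⁻¹ x g`, so the hypothesis `γ(c) = ι(c^{-σ})` reads
`γ c = MulAut.conj (σ c)`.  The conclusion asserts that `σ` is an endomorphism of `C`,
and renders the identity `σ γ(a)|_C (σ - 1) = (σ - 1) γ(a)|_C ι(a)|_C σ` of `End C`
pointwise on `C` (with the paper's left-to-right composition and `x^{σ-1} = (σ x) x⁻¹`). -/
theorem sigma_endomorphism_relation
    {G : Type u} [Group G] [Finite G] (hnab : ∃ x y : G, x * y ≠ y * x)
    (C : Subgroup G) (hC : C ≠ ⊥)
    (hCab : ∀ x ∈ C, ∀ y ∈ C, x * y = y * x)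
    (hCchar : C.Characteristic)
    (hCZ : C ⊓ Subgroup.center G = ⊥)
    (γ : G → MulAut G) (hγ : IsGammaFunction γ)
    (σ : G → G) (hσC : ∀ c ∈ C, σ c ∈ C)
    (hγσ : ∀ c ∈ C, γ c = MulAut.conj (σ c)) :
    (∀ c₁ ∈ C, ∀ c₂ ∈ C, σ (c₁ * c₂) = σ c₁ * σ c₂) ∧
    (∀ a : G, ∀ c ∈ C,
      σ (γ a (σ c)) * (γ a (σ c))⁻¹ = σ (a⁻¹ * γ a (σ c * c⁻¹) * a)) :=
  sigma_endomorphism_relation_general C hCab hCchar hCZ γ hγ σ hσC hγσ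
end HGS
end
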